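/- arXiv:2309.07044 — 7 statements merged into one kernel-verified Lean document; each statement's English description precedes it below -/
import Mathlib

section
/- Let σ : ℝ → ℝ be continuous and 2π-periodic. Then lim_{ℓ→∞} (1/(ℓ+1)) · Σ_{k=1}^{ℓ+1} λ_k(V_ℓ(σ)) = (1/π) · ∫_{−π}^{π} σ(φ) dφ, where λ_1(V_ℓ(σ)) ≤ … ≤ λ_{ℓ+1}(V_ℓ(σ)) are the eigenvalues of the Hermitian matrix V_ℓ(σ) listed in non-decreasing order with multiplicity (so the sum is the trace of V_ℓ(σ)). -/
open Real Filter Finset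


private noncomputable def cB (j : ℕ) : ℝ := (Nat.centralBinom j : ℝ)

private lemma cB_rec (j : ℕ) : ((j:ℝ)+1) * cB (j+1) = 2*(2*j+1) * cB j := by
  have := Nat.succ_mul_centralBinom_succ j
  unfold cB
  have h : ((j+1) * (j+1).centralBinom : ℝ) = ((2 * (2*j+1) * j.centralBinom : ℕ) : ℝ) := by
    exact_mod_cast congrArg (Nat.cast : ℕ → ℝ) this
  push_cast at h
  linarith

private lemma conv_identity (n : ℕ) :
    ∑ j ∈ range (n+1), cB j * cB (n-j) = 4^n := by
  induction n with
  | zero => simp [cB, Nat.centralBinom]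
  | succ n ih =>
    set S := fun m => ∑ j ∈ range (m+1), cB j * cB (m-j) with hS
    -- T n = (n+1) S n
    have hTsym : ∑ j ∈ range (n+1), (2*(j:ℝ)+1) * (cB j * cB (n-j))
        = ∑ j ∈ range (n+1), (2*((n:ℝ)-(j:ℝ))+1) * (cB j * cB (n-j)) := by
      rw [← Finset.sum_range_reflect (fun j => (2*((n:ℝ)-(j:ℝ))+1) * (cB j * cB (n-j))) (n+1)]
      apply Finset.sum_congr rfl
      intro j hj
      simp only [Finset.mem_range] at hj
      have hj' : j ≤ n := Nat.lt_succ_iff.mp hj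
      have h1 : n + 1 - 1 - j = n - j := by omega
      have h2 : n - (n - j) = j := by omega
      rw [h1, h2]
      have : ((n:ℝ) - ((n:ℕ) - (j:ℕ) : ℕ)) = (j:ℝ) := by
        push_cast [Nat.cast_sub hj']; ring
      rw [this]
      ring
    have hT : ∑ j ∈ range (n+1), (2*(j:ℝ)+1) * (cB j * cB (n-j)) = ((n:ℝ)+1) * S n := by
      have h2 : (∑ j ∈ range (n+1), (2*(j:ℝ)+1) * (cB j * cB (n-j)))
          + (∑ j ∈ range (n+1), (2*(j:ℝ)+1) * (cB j * cB (n-j)))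
          = (2*(n:ℝ)+2) * S n := by
        nth_rewrite 2 [hTsym]
        rw [← Finset.sum_add_distrib, hS, Finset.mul_sum]
        apply Finset.sum_congr rfl
        intro j hj
        ring
      linarith
    -- reflection identity for the (n+1) sum
    have hrefl : ∑ j ∈ range (n+2), ((j:ℝ)+1) * (cB j * cB (n+1-j))
        = ∑ j ∈ range (n+2), (((n+1-j:ℕ):ℝ)+1) * (cB j * cB (n+1-j)) := by
      rw [← Finset.sum_range_reflect (fun j => (((n+1-j:ℕ):ℝ)+1) * (cB j * cB (n+1-j))) (n+2)]
      apply Finset.sum_congr rfl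
      intro j hj
      simp only [Finset.mem_range] at hj
      have hj' : j ≤ n+1 := Nat.lt_succ_iff.mp hj
      have h1 : n + 2 - 1 - j = n + 1 - j := by omega
      have h2 : n + 1 - (n + 1 - j) = j := by omega
      rw [h1, h2]
      ring
    have hA2 : 2 * (∑ j ∈ range (n+2), ((j:ℝ)+1) * (cB j * cB (n+1-j)))
        = ((n:ℝ)+3) * S (n+1) := by
      rw [two_mul]
      nth_rewrite 2 [hrefl]
      rw [← Finset.sum_add_distrib, hS, Finset.mul_sum]
      show _ = ∑ j ∈ range (n+2), ((n:ℝ)+3) * (cB j * cB (n+1-j))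
      apply Finset.sum_congr rfl
      intro j hj
      simp only [Finset.mem_range] at hj
      have hj' : j ≤ n+1 := Nat.lt_succ_iff.mp hj
      have : (((n+1-j:ℕ)):ℝ) = (n:ℝ) + 1 - (j:ℝ) := by
        push_cast [Nat.cast_sub hj']; ring
      rw [this]
      ring
    have hA : ∑ j ∈ range (n+2), ((j:ℝ)+1) * (cB j * cB (n+1-j))
        = S (n+1) + 2*((n:ℝ)+1) * S n := by
      have hsplit : ∑ j ∈ range (n+2), ((j:ℝ)+1) * (cB j * cB (n+1-j))
          = (∑ j ∈ range (n+2), (j:ℝ) * (cB j * cB (n+1-j))) + S (n+1) := by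
        rw [hS, ← Finset.sum_add_distrib]
        apply Finset.sum_congr rfl
        intro j hj
        ring
      have hshift : ∑ j ∈ range (n+2), (j:ℝ) * (cB j * cB (n+1-j))
          = 2 * (∑ j ∈ range (n+1), (2*(j:ℝ)+1) * (cB j * cB (n-j))) := by
        rw [Finset.sum_range_succ' (fun j => (j:ℝ) * (cB j * cB (n+1-j))) (n+1)]
        rw [Finset.mul_sum]
        simp only [Nat.cast_zero, zero_mul, add_zero]
        apply Finset.sum_congr rfl
        intro i hi
        have h1 : n + 1 - (i+1) = n - i := by omega
        rw [h1]
        have h := cB_rec i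
        push_cast
        linear_combination cB (n-i) * h
      rw [hsplit, hshift, hT]
      ring
    have hn1 : (0:ℝ) < (n:ℝ)+1 := by positivity
    have hfin : ((n:ℝ)+1) * S (n+1) = ((n:ℝ)+1) * (4 * S n) := by linarith
    have hSn1 : S (n+1) = 4 * S n := by
      exact mul_left_cancel₀ (ne_of_gt hn1) hfin
    show S (n+1) = 4^(n+1)
    rw [hSn1, show S n = ∑ j ∈ range (n+1), cB j * cB (n-j) from rfl, ih]
    ring

private lemma gam2 (m : ℕ) :
    Real.Gamma ((m:ℝ)+1/2) / Real.Gamma ((m:ℝ)+1) = Real.sqrt π * cB m / 4^m := by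
  induction m with
  | zero =>
    norm_num [Real.Gamma_one, cB, Nat.centralBinom]
    rw [show ((1:ℝ)/2) = 1/2 from rfl]
    rw [Real.Gamma_one_half_eq]
  | succ m ih =>
    have hm2 : ((m:ℝ)+1/2) ≠ 0 := by positivity
    have hm1 : ((m:ℝ)+1) ≠ 0 := by positivity
    have e1 : ((m+1:ℕ):ℝ)+1/2 = ((m:ℝ)+1/2)+1 := by push_cast; ring
    have e2 : ((m+1:ℕ):ℝ)+1 = ((m:ℝ)+1)+1 := by push_cast; ring
    rw [e1, e2, Real.Gamma_add_one hm2, Real.Gamma_add_one hm1]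
    have hG2 : Real.Gamma ((m:ℝ)+1) > 0 := Real.Gamma_pos_of_pos (by positivity)
    have hrec := cB_rec m
    have h4 : (4:ℝ)^m > 0 := by positivity
    field_simp at ih ⊢
    linear_combination (4*((m:ℝ)*2+1)) * ih - 2*Real.sqrt π * Real.Gamma ((m:ℝ)+1) * hrec

/-- γ(x) = Γ(x/2 + 1/2) / Γ(x/2 + 1). -/
noncomputable def gam (x : ℝ) : ℝ := Real.Gamma (x/2 + 1/2) / Real.Gamma (x/2 + 1)

private lemma gam_eval (m : ℕ) : gam (2*(m:ℝ)) = Real.sqrt π * cB m / 4^m := by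
  unfold gam
  rw [show (2*(m:ℝ))/2 + 1/2 = (m:ℝ)+1/2 by ring, show (2*(m:ℝ))/2+1 = (m:ℝ)+1 by ring]
  exact gam2 m

private lemma sum_eig {n : Type*} [Fintype n] [DecidableEq n] {A : Matrix n n ℂ}
    (hA : A.IsHermitian) : ∑ i, (hA.eigenvalues i : ℂ) = A.trace := by
  nth_rewrite 2 [hA.spectral_theorem]
  rw [Unitary.conjStarAlgAut_apply, Matrix.trace_mul_cycle, Unitary.coe_star_mul_self, one_mul, Matrix.trace_diagonal]
  rfl


/-- A_{ℓ,m} = sqrt(((2ℓ+1)/π)·γ(ℓ−m)·γ(ℓ+m)) if |m| ≤ ℓ and ℓ−m is even, else 0. -/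
noncomputable def Acoef (ℓ : ℕ) (m : ℤ) : ℝ :=
  if |m| ≤ (ℓ : ℤ) ∧ Even ((ℓ : ℤ) - m) then
    Real.sqrt ((2*(ℓ:ℝ)+1)/Real.pi * gam ((ℓ : ℝ) - (m : ℝ)) * gam ((ℓ : ℝ) + (m : ℝ)))
  else 0

/-- The (ℓ+1)×(ℓ+1) Hermitian matrix V_ℓ(σ). -/
noncomputable def Vmat (σ : ℝ → ℝ) (ℓ : ℕ) : Matrix (Fin (ℓ+1)) (Fin (ℓ+1)) ℂ :=
  fun j k =>
    (((1/(2*Real.pi)) * Acoef ℓ (2*(j:ℤ) - ℓ) * Acoef ℓ (2*(k:ℤ) - ℓ) : ℝ) : ℂ) *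
      ∫ φ in (-Real.pi)..Real.pi,
        (σ φ : ℂ) * Complex.exp (Complex.I * (((2*((j:ℤ) - (k:ℤ))) : ℤ) : ℂ) * (φ : ℂ))

private lemma cB_pos (m : ℕ) : 0 < cB m := by
  unfold cB; exact_mod_cast Nat.centralBinom_pos m

private lemma Acoef_sq (ℓ j : ℕ) (hj : j ≤ ℓ) :
    Acoef ℓ (2*(j:ℤ) - ℓ) ^ 2 = (2*(ℓ:ℝ)+1) * (cB (ℓ-j) * cB j) / 4^ℓ := by
  have hcond : |2*(j:ℤ) - (ℓ:ℤ)| ≤ (ℓ:ℤ) ∧ Even ((ℓ:ℤ) - (2*(j:ℤ) - ℓ)) := by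
    refine ⟨abs_le.mpr ⟨by omega, by omega⟩, ⟨(ℓ:ℤ) - j, by ring⟩⟩
  unfold Acoef
  rw [if_pos hcond]
  have e1 : (ℓ:ℝ) - ((2*(j:ℤ) - (ℓ:ℤ) : ℤ):ℝ) = 2*((ℓ-j:ℕ):ℝ) := by
    push_cast [Nat.cast_sub hj]; ring
  have e2 : (ℓ:ℝ) + ((2*(j:ℤ) - (ℓ:ℤ) : ℤ):ℝ) = 2*((j:ℕ):ℝ) := by
    push_cast; ring
  rw [e1, e2, gam_eval (ℓ-j), gam_eval j]
  have h1 := cB_pos (ℓ-j)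
  have h2 := cB_pos j
  have hs : (0:ℝ) ≤ Real.sqrt π := Real.sqrt_nonneg π
  have hπ : (0:ℝ) < π := Real.pi_pos
  rw [Real.sq_sqrt (by positivity)]
  have hππ : Real.sqrt π * Real.sqrt π = π := Real.mul_self_sqrt hπ.le
  have h4 : (4:ℝ)^(ℓ-j) * 4^j = 4^ℓ := by
    rw [← pow_add]; congr 1; omega
  have h4a : (0:ℝ) < 4^(ℓ-j) := by positivity
  have h4b : (0:ℝ) < 4^j := by positivity
  have hstep : (2*(ℓ:ℝ)+1)/π * (Real.sqrt π * cB (ℓ-j) / 4^(ℓ-j)) * (Real.sqrt π * cB j / 4^j)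
      = (2*(ℓ:ℝ)+1) * (Real.sqrt π * Real.sqrt π / π) * (cB (ℓ-j) * cB j) / (4^(ℓ-j) * 4^j) := by
    ring
  rw [hstep, hππ, div_self hπ.ne', mul_one, h4]

private lemma Vmat_diag (σ : ℝ → ℝ) (ℓ : ℕ) (j : Fin (ℓ+1)) :
    Vmat σ ℓ j j =
      ((1/(2*Real.pi)) * Acoef ℓ (2*(j:ℤ) - ℓ) ^ 2 * ∫ φ in (-Real.pi)..Real.pi, σ φ : ℝ) := by
  unfold Vmat
  have h0 : ((2*((j:ℤ) - (j:ℤ)) : ℤ) : ℂ) = 0 := by norm_num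
  rw [h0]
  simp only [mul_zero, zero_mul, Complex.exp_zero, mul_one]
  rw [intervalIntegral.integral_ofReal]
  push_cast
  ring

theorem trace_asymptotics
    (σ : ℝ → ℝ) (hσ : Continuous σ) (hper : Function.Periodic σ (2*Real.pi))
    (hH : ∀ ℓ : ℕ, (Vmat σ ℓ).IsHermitian) :
    Tendsto
      (fun ℓ : ℕ => (1/((ℓ:ℝ)+1)) * ∑ k, (hH ℓ).eigenvalues k)
      atTop
      (nhds ((1/Real.pi) * ∫ φ in (-Real.pi)..Real.pi, σ φ)) := by
  set I : ℝ := ∫ φ in (-Real.pi)..Real.pi, σ φ with hI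
  have hπ : (0:ℝ) < π := Real.pi_pos
  have hsum : ∀ ℓ : ℕ, ∑ k, (hH ℓ).eigenvalues k = (2*(ℓ:ℝ)+1)/(2*π) * I := by
    intro ℓ
    have htr : (Vmat σ ℓ).trace = (((2*(ℓ:ℝ)+1)/(2*π) * I : ℝ) : ℂ) := by
      rw [Matrix.trace]
      have hterm : ∀ j : Fin (ℓ+1), (Vmat σ ℓ).diag j =
          (((1/(2*π)) * ((2*(ℓ:ℝ)+1) * (cB (ℓ-(j:ℕ)) * cB (j:ℕ)) / 4^ℓ) * I : ℝ) : ℂ) := by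
        intro j
        rw [Matrix.diag_apply, Vmat_diag σ ℓ j, Acoef_sq ℓ j (Nat.lt_succ_iff.mp j.isLt)]
      rw [Finset.sum_congr rfl (fun j _ => hterm j), ← Complex.ofReal_sum]
      congr 1
      have hc : ∑ j : Fin (ℓ+1), cB (j:ℕ) * cB (ℓ-(j:ℕ)) = 4^ℓ := by
        rw [Fin.sum_univ_eq_sum_range (fun j => cB j * cB (ℓ-j)) (ℓ+1)]
        exact conv_identity ℓ
      have h4 : ((4:ℝ)^ℓ) ≠ 0 := by positivity
      calc ∑ j : Fin (ℓ+1), 1/(2*π) * ((2*(ℓ:ℝ)+1) * (cB (ℓ-(j:ℕ)) * cB (j:ℕ)) / 4^ℓ) * I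
          = 1/(2*π) * ((2*(ℓ:ℝ)+1) / 4^ℓ) * I *
              ∑ j : Fin (ℓ+1), cB (j:ℕ) * cB (ℓ-(j:ℕ)) := by
            rw [Finset.mul_sum]
            apply Finset.sum_congr rfl
            intro j _
            ring
        _ = (2*(ℓ:ℝ)+1)/(2*π) * I := by
            rw [hc]
            field_simp
    have h1 : ((∑ k, (hH ℓ).eigenvalues k : ℝ) : ℂ) = (((2*(ℓ:ℝ)+1)/(2*π) * I : ℝ) : ℂ) := by
      rw [Complex.ofReal_sum, sum_eig (hH ℓ), htr]
    exact_mod_cast h1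
  have key : Tendsto (fun ℓ : ℕ => (2 - 1/((ℓ:ℝ)+1)) * (I/(2*π))) atTop
      (nhds ((2 - 0) * (I/(2*π)))) :=
    (tendsto_const_nhds.sub tendsto_one_div_add_atTop_nhds_zero_nat).mul_const _
  have h20 : ((2:ℝ) - 0) * (I/(2*π)) = (1/π) * I := by field_simp; ring
  rw [← h20]
  apply key.congr'
  filter_upwards with ℓ
  rw [hsum ℓ]
  have hl1 : ((ℓ:ℝ)+1) ≠ 0 := by positivity
  have h2 : (2 - 1/((ℓ:ℝ)+1)) = (2*(ℓ:ℝ)+1)/((ℓ:ℝ)+1) := by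
    field_simp
    ring
  rw [h2]
  ring
end

section
/- Let σ : ℝ → ℝ be continuous and 2π-periodic. Then there exists a constant C > 0 such that for every integer ℓ ≥ 1 and every k ∈ {1,…,ℓ+1}, the eigenvalues of the Hermitian matrix V_ℓ(σ) satisfy |λ_k(V_ℓ(σ))| ≤ C·√ℓ (equivalently, the spectral norm of V_ℓ(σ) is O(√ℓ) as ℓ → ∞). -/
open Real Filter Finset Matrix

lemma gam_pos {x : ℝ} (hx : 0 ≤ x) : 0 < gam x :=
  div_pos (Real.Gamma_pos_of_pos (by linarith)) (Real.Gamma_pos_of_pos (by linarith))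

lemma gam_mul_gam_succ {x : ℝ} (hx : 0 ≤ x) : gam x * gam (x+1) = 2/(x+1) := by
  have h1 : (0:ℝ) < x/2 + 1/2 := by linarith
  have h2 : Real.Gamma ((x+1)/2 + 1) = (x/2 + 1/2) * Real.Gamma (x/2 + 1/2) := by
    have : (x+1)/2 + 1 = (x/2 + 1/2) + 1 := by ring
    rw [this, Real.Gamma_add_one h1.ne']
  have h3 : (x+1)/2 + 1/2 = x/2 + 1 := by ring
  have hΓ1 : Real.Gamma (x/2 + 1/2) ≠ 0 := (Real.Gamma_pos_of_pos h1).ne'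
  have hΓ2 : Real.Gamma (x/2 + 1) ≠ 0 := (Real.Gamma_pos_of_pos (by linarith)).ne'
  unfold gam
  rw [h2, h3]
  field_simp

lemma gam_succ_le {x : ℝ} (hx : 0 ≤ x) : gam (x+1) ≤ gam x := by
  -- log-convexity: Γ(x/2+1)² ≤ Γ(x/2+1/2) Γ(x/2+3/2)
  have h1 : (0:ℝ) < x/2 + 1/2 := by linarith
  have h2 : (0:ℝ) < x/2 + 3/2 := by linarith
  have hconv := Real.convexOn_log_Gamma.2 (Set.mem_Ioi.2 h1) (Set.mem_Ioi.2 h2)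
    (by norm_num : (0:ℝ) ≤ 1/2) (by norm_num : (0:ℝ) ≤ 1/2) (by norm_num)
  have hmid : (1/2 : ℝ) • (x/2 + 1/2) + (1/2 : ℝ) • (x/2 + 3/2) = x/2 + 1 := by
    simp only [smul_eq_mul]; ring
  rw [hmid] at hconv
  simp only [Function.comp, smul_eq_mul] at hconv
  have key : (Real.Gamma (x/2+1))^2 ≤ Real.Gamma (x/2+1/2) * Real.Gamma (x/2+3/2) := by
    have := Real.exp_le_exp.2 hconv
    rw [Real.exp_log (Real.Gamma_pos_of_pos (by linarith)), Real.exp_add,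
      ← Real.exp_log (Real.Gamma_pos_of_pos h1), ← Real.exp_log (Real.Gamma_pos_of_pos h2)] at this
    have hsq : (Real.Gamma (x/2+1))^2 ≤ (Real.exp (1/2 * Real.log (Real.Gamma (x/2+1/2)) + 1/2 * Real.log (Real.Gamma (x/2+3/2))))^2 := by
      apply pow_le_pow_left₀ (Real.Gamma_pos_of_pos (by linarith)).le
      calc Real.Gamma (x/2+1) = Real.exp (Real.log (Real.Gamma (x/2+1))) := (Real.exp_log (Real.Gamma_pos_of_pos (by linarith))).symm
        _ ≤ _ := Real.exp_le_exp.2 hconv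
    calc (Real.Gamma (x/2+1))^2 ≤ _ := hsq
      _ = Real.Gamma (x/2+1/2) * Real.Gamma (x/2+3/2) := by
          rw [← Real.exp_nat_mul]
          rw [show (2:ℕ) * (1/2 * Real.log (Real.Gamma (x/2+1/2)) + 1/2 * Real.log (Real.Gamma (x/2+3/2))) = Real.log (Real.Gamma (x/2+1/2)) + Real.log (Real.Gamma (x/2+3/2)) by push_cast; ring]
          rw [Real.exp_add, Real.exp_log (Real.Gamma_pos_of_pos h1), Real.exp_log (Real.Gamma_pos_of_pos h2)]
  have e1 : gam (x+1) = Real.Gamma (x/2+1) / Real.Gamma (x/2+3/2) := by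
    unfold gam; rw [show (x+1)/2 + 1/2 = x/2+1 by ring, show (x+1)/2 + 1 = x/2+3/2 by ring]
  have e2 : gam x = Real.Gamma (x/2+1/2) / Real.Gamma (x/2+1) := rfl
  rw [e1, e2, div_le_div_iff₀ (Real.Gamma_pos_of_pos h2) (Real.Gamma_pos_of_pos (by linarith))]
  nlinarith [key]

lemma gam_nat_le (n : ℕ) : gam n ≤ Real.sqrt Real.pi := by
  induction n with
  | zero =>
    simp only [Nat.cast_zero]
    unfold gam
    norm_num [Real.Gamma_one]
    rw [Real.Gamma_one_half_eq]
  | succ n ih =>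
    calc gam (n+1 : ℕ) = gam ((n:ℝ)+1) := by push_cast; ring_nf
      _ ≤ gam n := gam_succ_le (Nat.cast_nonneg n)
      _ ≤ _ := ih

lemma gam_nat_le_of_ge {q ℓ : ℕ} (hq : ℓ ≤ q) (hℓ : 1 ≤ ℓ) :
    gam q ≤ Real.sqrt 2 / Real.sqrt ℓ := by
  have hq1 : 1 ≤ q := le_trans hℓ hq
  have hx : (q:ℝ) - 1 ≥ 0 := by
    have : (1:ℝ) ≤ q := by exact_mod_cast hq1
    linarith
  have h1 := gam_mul_gam_succ hx
  have h2 := gam_succ_le hx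
  have hsq : gam q ^ 2 ≤ 2 / ℓ := by
    have e : ((q:ℝ) - 1) + 1 = q := by ring
    rw [e] at h1 h2
    have hgq : 0 < gam q := gam_pos (by positivity)
    have h4 : gam q ^ 2 ≤ 2/(q:ℝ) := by nlinarith
    have h5 : (2:ℝ)/q ≤ 2/ℓ := by
      apply div_le_div_of_nonneg_left (by norm_num) (by exact_mod_cast hℓ)
      exact_mod_cast hq
    linarith
  calc gam q = Real.sqrt (gam q ^ 2) := (Real.sqrt_sq (gam_pos (by positivity)).le).symm
    _ ≤ Real.sqrt (2/ℓ) := Real.sqrt_le_sqrt hsq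
    _ = Real.sqrt 2 / Real.sqrt ℓ := Real.sqrt_div (by norm_num) _

lemma gam_prod_le {p q ℓ : ℕ} (hpq : p + q = 2*ℓ) (hℓ : 1 ≤ ℓ) :
    gam p * gam q ≤ Real.sqrt (2*Real.pi) / Real.sqrt ℓ := by
  have key : ∀ a b : ℕ, a + b = 2*ℓ → ℓ ≤ b → gam a * gam b ≤ Real.sqrt (2*Real.pi) / Real.sqrt ℓ := by
    intro a b hab hb
    have h1 : gam a ≤ Real.sqrt Real.pi := gam_nat_le a
    have h2 : gam b ≤ Real.sqrt 2 / Real.sqrt ℓ := gam_nat_le_of_ge hb hℓ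
    have := mul_le_mul h1 h2 (gam_pos (by positivity)).le (Real.sqrt_nonneg _)
    calc gam a * gam b ≤ Real.sqrt Real.pi * (Real.sqrt 2 / Real.sqrt ℓ) := this
      _ = Real.sqrt (2*Real.pi) / Real.sqrt ℓ := by
          rw [Real.sqrt_mul (by norm_num) Real.pi]
          ring
  rcases le_or_gt ℓ q with h | h
  · exact key p q hpq h
  · have hp : ℓ ≤ p := by omega
    rw [mul_comm]
    exact key q p (by omega) hp

lemma Acoef_sq_le {ℓ : ℕ} (hℓ : 1 ≤ ℓ) (m : ℤ) :
    Acoef ℓ m ^ 2 ≤ (3 * Real.sqrt (2*Real.pi) / Real.pi) * Real.sqrt ℓ := by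
  have hK : 0 ≤ (3 * Real.sqrt (2*Real.pi) / Real.pi) * Real.sqrt ℓ := by positivity
  unfold Acoef
  split_ifs with h
  · obtain ⟨h1, _⟩ := h
    rw [abs_le] at h1
    obtain ⟨h1a, h1b⟩ := h1
    set p : ℕ := ((ℓ:ℤ) - m).toNat with hp
    set q : ℕ := ((ℓ:ℤ) + m).toNat with hq
    have hpc : (p : ℝ) = (ℓ:ℝ) - (m:ℝ) := by
      have : ((p:ℤ) : ℝ) = (((ℓ:ℤ) - m : ℤ) : ℝ) := by
        rw [hp, Int.toNat_of_nonneg (by omega)]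
      push_cast at this ⊢; linarith
    have hqc : (q : ℝ) = (ℓ:ℝ) + (m:ℝ) := by
      have : ((q:ℤ) : ℝ) = (((ℓ:ℤ) + m : ℤ) : ℝ) := by
        rw [hq, Int.toNat_of_nonneg (by omega)]
      push_cast at this ⊢; linarith
    have hpq : p + q = 2*ℓ := by omega
    have hgp : 0 < gam ((ℓ:ℝ) - m) := by rw [← hpc]; exact gam_pos (Nat.cast_nonneg p)
    have hgq : 0 < gam ((ℓ:ℝ) + m) := by rw [← hqc]; exact gam_pos (Nat.cast_nonneg q)
    have hX : (0:ℝ) ≤ (2*(ℓ:ℝ)+1)/Real.pi * gam ((ℓ:ℝ) - m) * gam ((ℓ:ℝ) + m) := by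
      have := Real.pi_pos; positivity
    rw [Real.sq_sqrt hX]
    have hprod : gam ((ℓ:ℝ) - m) * gam ((ℓ:ℝ) + m) ≤ Real.sqrt (2*Real.pi) / Real.sqrt ℓ := by
      rw [← hpc, ← hqc]; exact gam_prod_le hpq hℓ
    have hl1 : (1:ℝ) ≤ ℓ := by exact_mod_cast hℓ
    have hcoef : (2*(ℓ:ℝ)+1)/Real.pi ≤ 3*(ℓ:ℝ)/Real.pi := by
      exact (div_le_div_iff_of_pos_right Real.pi_pos).2 (by linarith)
    have hcoef0 : (0:ℝ) ≤ (2*(ℓ:ℝ)+1)/Real.pi := by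
      have := Real.pi_pos; positivity
    calc (2*(ℓ:ℝ)+1)/Real.pi * gam ((ℓ:ℝ) - m) * gam ((ℓ:ℝ) + m)
        = (2*(ℓ:ℝ)+1)/Real.pi * (gam ((ℓ:ℝ) - m) * gam ((ℓ:ℝ) + m)) := by ring
      _ ≤ (3*(ℓ:ℝ)/Real.pi) * (Real.sqrt (2*Real.pi) / Real.sqrt ℓ) := by
          apply mul_le_mul hcoef hprod (by positivity) (by positivity)
      _ = (3 * Real.sqrt (2*Real.pi) / Real.pi) * ((ℓ:ℝ) / Real.sqrt ℓ) := by ring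
      _ = (3 * Real.sqrt (2*Real.pi) / Real.pi) * Real.sqrt ℓ := by
          rw [Real.div_sqrt]
  · simpa using hK


lemma int_exp (n : ℤ) : (∫ φ in (-Real.pi)..Real.pi, Complex.exp (Complex.I * (n:ℂ) * φ))
    = if n = 0 then (2*Real.pi : ℂ) else 0 := by
  split_ifs with h
  · subst h
    simp [Complex.exp_zero]
    norm_num
    ring
  · have hc : Complex.I * (n:ℂ) ≠ 0 := by
      simp [Complex.I_ne_zero, Complex.ofReal_ne_zero]
      exact_mod_cast h
    have := integral_exp_mul_complex (a := -Real.pi) (b := Real.pi) hc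
    rw [show (fun φ : ℝ => Complex.exp (Complex.I * (n:ℂ) * φ)) = fun φ : ℝ => Complex.exp ((Complex.I * (n:ℂ)) * φ) from rfl] at this
    rw [this]
    have hper : Complex.exp (Complex.I * (n:ℂ) * (Real.pi:ℂ)) = Complex.exp (Complex.I * (n:ℂ) * ((-Real.pi:ℝ):ℂ)) := by
      rw [show Complex.I * (n:ℂ) * (Real.pi:ℂ) = Complex.I * (n:ℂ) * ((-Real.pi:ℝ):ℂ) + (n:ℂ) * (2*(Real.pi:ℂ)*Complex.I) by push_cast; ring]
      rw [Complex.exp_add, Complex.exp_int_mul_two_pi_mul_I, mul_one]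
    rw [hper]
    simp

lemma key_bound (σ : ℝ → ℝ) (hσ : Continuous σ) (M : ℝ) (hM : ∀ x, |σ x| ≤ M)
    (ℓ : ℕ) (hℓ : 1 ≤ ℓ) (hH : (Vmat σ ℓ).IsHermitian) (k : Fin (ℓ+1)) :
    |hH.eigenvalues k| ≤ M * ((3 * Real.sqrt (2*Real.pi) / Real.pi) * Real.sqrt ℓ) := by
  have hM0 : 0 ≤ M := le_trans (abs_nonneg _) (hM 0)
  set v : EuclideanSpace ℂ (Fin (ℓ+1)) := hH.eigenvectorBasis k with hv_def
  have hv : Vmat σ ℓ *ᵥ v = hH.eigenvalues k • v := hH.mulVec_eigenvectorBasis k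
  have hv1 : ∑ j, (starRingEnd ℂ) (v j) * v j = 1 := by
    have := hH.eigenvectorBasis.orthonormal.1 k
    have hinner : (inner ℂ v v : ℂ) = 1 := by
      rw [inner_self_eq_norm_sq_to_K]; rw [this]; norm_num
    rw [← hinner, PiLp.inner_apply]
    simp [mul_comm, Complex.mul_conj, Complex.normSq_eq_norm_sq]
  set A : Fin (ℓ+1) → ℝ := fun j => Acoef ℓ (2*(j:ℤ) - ℓ) with hA_def
  set c : Fin (ℓ+1) → ℂ := fun j => (A j : ℂ) * (starRingEnd ℂ) (v j) with hc_def
  set g : ℝ → ℂ := fun φ => ∑ j, c j * Complex.exp (Complex.I * ((2*(j:ℤ) : ℤ):ℂ) * φ) with hg_def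
  have hgcont : Continuous g := by
    apply continuous_finset_sum
    intro j _
    exact continuous_const.mul ((continuous_const.mul Complex.continuous_ofReal).cexp)
  -- Step 1: λ as quadratic form
  have step1 : ((hH.eigenvalues k : ℝ) : ℂ) = ∑ j, (starRingEnd ℂ) (v j) * (Vmat σ ℓ *ᵥ v) j := by
    rw [hv]
    calc ((hH.eigenvalues k : ℝ) : ℂ)
        = ((hH.eigenvalues k : ℝ) : ℂ) * ∑ j, (starRingEnd ℂ) (v j) * v j := by rw [hv1, mul_one]
      _ = ∑ j, (starRingEnd ℂ) (v j) * (((hH.eigenvalues k : ℝ):ℂ) * v j) := by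
          rw [Finset.mul_sum]; congr 1; ext j; ring
  -- Step 3: quadratic form as integral
  have step3 : ∑ j, (starRingEnd ℂ) (v j) * (Vmat σ ℓ *ᵥ v) j
      = ((1/(2*Real.pi) : ℝ) : ℂ) *
        ∫ φ in (-Real.pi)..Real.pi, (σ φ : ℂ) * (g φ * (starRingEnd ℂ) (g φ)) := by
    have hconjc : ∀ k' : Fin (ℓ+1), (starRingEnd ℂ) (c k') = ((A k' : ℝ):ℂ) * v k' := by
      intro k'; simp [hc_def, Complex.conj_ofReal]
    set F : Fin (ℓ+1) → Fin (ℓ+1) → ℝ → ℂ := fun j k' φ =>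
      (σ φ : ℂ) * ((c j * Complex.exp (Complex.I * ((2*(j:ℤ) : ℤ):ℂ) * φ)) *
        (starRingEnd ℂ) (c k' * Complex.exp (Complex.I * ((2*(k':ℤ) : ℤ):ℂ) * φ))) with hF_def
    have hFcont : ∀ j k' : Fin (ℓ+1), Continuous (F j k') := by
      intro j k'
      apply (Complex.continuous_ofReal.comp hσ).mul
      apply Continuous.mul
      · exact continuous_const.mul ((continuous_const.mul Complex.continuous_ofReal).cexp)
      · exact Complex.continuous_conj.comp
          (continuous_const.mul ((continuous_const.mul Complex.continuous_ofReal).cexp))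
    have entry : ∀ j k' : Fin (ℓ+1), (starRingEnd ℂ) (v j) * (Vmat σ ℓ j k' * v k')
        = ((1/(2*Real.pi) : ℝ) : ℂ) * ∫ φ in (-Real.pi)..Real.pi, F j k' φ := by
      intro j k'
      have hpt : ∀ φ : ℝ, F j k' φ
          = (c j * (((A k' : ℝ):ℂ) * v k')) *
            ((σ φ : ℂ) * Complex.exp (Complex.I * (((2*((j:ℤ) - (k':ℤ))) : ℤ) : ℂ) * φ)) := by
        intro φ
        rw [hF_def]
        simp only
        rw [_root_.map_mul, hconjc, ← Complex.exp_conj]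
        have hc1 : (starRingEnd ℂ) (Complex.I * ((2*(k':ℤ) : ℤ):ℂ) * φ)
            = -(Complex.I * ((2*(k':ℤ) : ℤ):ℂ) * φ) := by
          simp only [_root_.map_mul, Complex.conj_I, Complex.conj_ofReal, map_intCast]
          ring
        rw [hc1]
        rw [show c j * Complex.exp (Complex.I * ((2*(j:ℤ) : ℤ):ℂ) * φ) *
            (((A k' : ℝ):ℂ) * v k' * Complex.exp (-(Complex.I * ((2*(k':ℤ) : ℤ):ℂ) * φ)))
          = (c j * (((A k' : ℝ):ℂ) * v k')) *
            (Complex.exp (Complex.I * ((2*(j:ℤ) : ℤ):ℂ) * φ) *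
             Complex.exp (-(Complex.I * ((2*(k':ℤ) : ℤ):ℂ) * φ))) from by ring]
        rw [← Complex.exp_add]
        rw [show Complex.I * ((2*(j:ℤ) : ℤ):ℂ) * φ + -(Complex.I * ((2*(k':ℤ) : ℤ):ℂ) * φ)
            = Complex.I * (((2*((j:ℤ) - (k':ℤ))) : ℤ) : ℂ) * φ from by push_cast; ring]
        ring
      calc (starRingEnd ℂ) (v j) * (Vmat σ ℓ j k' * v k')
          = (c j * (((A k' : ℝ):ℂ) * v k')) * (((1/(2*Real.pi) : ℝ) : ℂ) *
              ∫ φ in (-Real.pi)..Real.pi,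
                (σ φ : ℂ) * Complex.exp (Complex.I * (((2*((j:ℤ) - (k':ℤ))) : ℤ) : ℂ) * φ)) := by
            unfold Vmat
            simp only [hc_def, hA_def]
            push_cast
            ring
        _ = ((1/(2*Real.pi) : ℝ) : ℂ) * ∫ φ in (-Real.pi)..Real.pi,
              (c j * (((A k' : ℝ):ℂ) * v k')) *
              ((σ φ : ℂ) * Complex.exp (Complex.I * (((2*((j:ℤ) - (k':ℤ))) : ℤ) : ℂ) * φ)) := by
            rw [intervalIntegral.integral_const_mul]
            ring
        _ = ((1/(2*Real.pi) : ℝ) : ℂ) * ∫ φ in (-Real.pi)..Real.pi, F j k' φ := by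
            congr 1
            apply intervalIntegral.integral_congr
            intro φ _
            rw [hpt φ]
    calc ∑ j, (starRingEnd ℂ) (v j) * (Vmat σ ℓ *ᵥ v) j
        = ∑ j, ∑ k', (starRingEnd ℂ) (v j) * (Vmat σ ℓ j k' * v k') := by
          apply Finset.sum_congr rfl
          intro j _
          rw [Matrix.mulVec, dotProduct, Finset.mul_sum]
      _ = ∑ j, ∑ k', ((1/(2*Real.pi) : ℝ) : ℂ) * ∫ φ in (-Real.pi)..Real.pi, F j k' φ := by
          exact Finset.sum_congr rfl fun j _ => Finset.sum_congr rfl fun k' _ => entry j k'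
      _ = ((1/(2*Real.pi) : ℝ) : ℂ) * ∑ j, ∑ k', ∫ φ in (-Real.pi)..Real.pi, F j k' φ := by
          rw [Finset.mul_sum]
          exact Finset.sum_congr rfl fun j _ => by rw [Finset.mul_sum]
      _ = ((1/(2*Real.pi) : ℝ) : ℂ) * ∫ φ in (-Real.pi)..Real.pi, ∑ j, ∑ k', F j k' φ := by
          congr 1
          rw [intervalIntegral.integral_finset_sum
            (fun j _ => (continuous_finset_sum _ (fun i _ => hFcont j i)).intervalIntegrable _ _)]
          exact Finset.sum_congr rfl fun j _ =>
            (intervalIntegral.integral_finset_sum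
              (fun i _ => (hFcont j i).intervalIntegrable _ _)).symm
      _ = ((1/(2*Real.pi) : ℝ) : ℂ) *
          ∫ φ in (-Real.pi)..Real.pi, (σ φ : ℂ) * (g φ * (starRingEnd ℂ) (g φ)) := by
          congr 1
          apply intervalIntegral.integral_congr
          intro φ _
          rw [hg_def]
          simp only
          rw [map_sum, Finset.sum_mul_sum, Finset.mul_sum]
          apply Finset.sum_congr rfl
          intro j _
          rw [Finset.mul_sum]
  -- Step 5: Parseval
  have step5 : (∫ φ in (-Real.pi)..Real.pi, ‖g φ‖^2) = 2*Real.pi * ∑ j, ‖c j‖^2 := by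
    have hpt : ∀ φ : ℝ, g φ * (starRingEnd ℂ) (g φ)
        = ∑ j, ∑ k', (c j * (starRingEnd ℂ) (c k')) *
            Complex.exp (Complex.I * (((2*((j:ℤ)-(k':ℤ))):ℤ):ℂ) * φ) := by
      intro φ
      rw [hg_def]
      simp only
      rw [map_sum, Finset.sum_mul_sum]
      refine Finset.sum_congr rfl fun j _ => Finset.sum_congr rfl fun k' _ => ?_
      rw [_root_.map_mul, ← Complex.exp_conj]
      have hc1 : (starRingEnd ℂ) (Complex.I * ((2*(k':ℤ) : ℤ):ℂ) * φ)
          = -(Complex.I * ((2*(k':ℤ) : ℤ):ℂ) * φ) := by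
        simp only [_root_.map_mul, Complex.conj_I, Complex.conj_ofReal, map_intCast]
        ring
      rw [hc1]
      rw [show (c j * Complex.exp (Complex.I * ((2*(j:ℤ):ℤ):ℂ) * φ)) *
            ((starRingEnd ℂ) (c k') * Complex.exp (-(Complex.I * ((2*(k':ℤ):ℤ):ℂ) * φ)))
          = (c j * (starRingEnd ℂ) (c k')) *
            (Complex.exp (Complex.I * ((2*(j:ℤ):ℤ):ℂ) * φ) *
             Complex.exp (-(Complex.I * ((2*(k':ℤ):ℤ):ℂ) * φ))) from by ring]
      rw [← Complex.exp_add]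
      congr 2
      push_cast
      ring
    have hecont : ∀ (m : ℤ), Continuous fun φ : ℝ => Complex.exp (Complex.I * (m:ℂ) * φ) :=
      fun m => (continuous_const.mul Complex.continuous_ofReal).cexp
    have hCint : (∫ φ in (-Real.pi)..Real.pi, g φ * (starRingEnd ℂ) (g φ))
        = ((2*Real.pi * ∑ j, ‖c j‖^2 : ℝ) : ℂ) := by
      rw [intervalIntegral.integral_congr (g := fun φ => ∑ j, ∑ k',
        (c j * (starRingEnd ℂ) (c k')) *
          Complex.exp (Complex.I * (((2*((j:ℤ)-(k':ℤ))):ℤ):ℂ) * φ)) (fun φ _ => hpt φ)]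
      rw [intervalIntegral.integral_finset_sum (f := fun (j : Fin (ℓ+1)) (φ : ℝ) => ∑ k' : Fin (ℓ+1),
          (c j * (starRingEnd ℂ) (c k')) *
            Complex.exp (Complex.I * (((2*((j:ℤ)-(k':ℤ))):ℤ):ℂ) * φ)) (fun j _ =>
        (continuous_finset_sum _ (fun k' _ =>
          continuous_const.mul (hecont _))).intervalIntegrable _ _)]
      have inner_eq : ∀ j : Fin (ℓ+1), (∫ φ in (-Real.pi)..Real.pi, ∑ k',
          (c j * (starRingEnd ℂ) (c k')) *
            Complex.exp (Complex.I * (((2*((j:ℤ)-(k':ℤ))):ℤ):ℂ) * φ))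
          = (Complex.normSq (c j) : ℂ) * (2*Real.pi : ℂ) := by
        intro j
        rw [intervalIntegral.integral_finset_sum (f := fun (k' : Fin (ℓ+1)) (φ : ℝ) =>
            (c j * (starRingEnd ℂ) (c k')) *
              Complex.exp (Complex.I * (((2*((j:ℤ)-(k':ℤ))):ℤ):ℂ) * φ)) (fun k' _ =>
          (continuous_const.mul (hecont _)).intervalIntegrable _ _)]
        have term_eq : ∀ k' : Fin (ℓ+1), (∫ φ in (-Real.pi)..Real.pi,
            (c j * (starRingEnd ℂ) (c k')) *
              Complex.exp (Complex.I * (((2*((j:ℤ)-(k':ℤ))):ℤ):ℂ) * φ))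
            = (c j * (starRingEnd ℂ) (c k')) *
              (if (2*((j:ℤ)-(k':ℤ)) : ℤ) = 0 then (2*Real.pi : ℂ) else 0) := by
          intro k'
          rw [intervalIntegral.integral_const_mul, int_exp]
        rw [Finset.sum_congr rfl fun k' _ => term_eq k']
        rw [Finset.sum_eq_single j]
        · rw [if_pos (by ring), Complex.mul_conj]
        · intro b _ hbj
          rw [if_neg, mul_zero]
          intro hcontra
          apply hbj
          have : (b:ℤ) = (j:ℤ) := by omega
          exact Fin.ext (by exact_mod_cast this)
        · intro hj
          exact absurd (Finset.mem_univ j) hj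
      rw [Finset.sum_congr rfl fun j _ => inner_eq j]
      rw [← Finset.sum_mul]
      push_cast
      rw [show ∀ z w : ℂ, z * w = w * z from fun z w => mul_comm z w]
      congr 1
      refine Finset.sum_congr rfl fun j _ => ?_
      rw [Complex.normSq_eq_norm_sq]
      norm_num
    have hRe : ((∫ φ in (-Real.pi)..Real.pi, ‖g φ‖^2 : ℝ) : ℂ)
        = (∫ φ in (-Real.pi)..Real.pi, g φ * (starRingEnd ℂ) (g φ)) := by
      rw [← intervalIntegral.integral_ofReal]
      apply intervalIntegral.integral_congr
      intro φ _
      show ((‖g φ‖^2 : ℝ) : ℂ) = g φ * (starRingEnd ℂ) (g φ)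
      rw [Complex.mul_conj, Complex.normSq_eq_norm_sq]
    apply Complex.ofReal_injective
    rw [hRe, hCint]
  -- Step 6
  have hvnorm : ∑ j, ‖v j‖^2 = 1 := by
    apply Complex.ofReal_injective
    push_cast
    rw [← hv1]
    refine Finset.sum_congr rfl fun j _ => ?_
    rw [mul_comm, Complex.mul_conj, Complex.normSq_eq_norm_sq]
    norm_num
  have step6 : ∑ j, ‖c j‖^2 ≤ (3 * Real.sqrt (2*Real.pi) / Real.pi) * Real.sqrt ℓ := by
    have hcj : ∀ j : Fin (ℓ+1), ‖c j‖^2 = (A j)^2 * ‖v j‖^2 := by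
      intro j
      rw [hc_def]
      simp only
      rw [norm_mul, RCLike.norm_conj, Complex.norm_real, Real.norm_eq_abs, mul_pow, sq_abs]
    calc ∑ j, ‖c j‖^2 = ∑ j, (A j)^2 * ‖v j‖^2 := Finset.sum_congr rfl fun j _ => hcj j
      _ ≤ ∑ j, ((3 * Real.sqrt (2*Real.pi) / Real.pi) * Real.sqrt ℓ) * ‖v j‖^2 := by
          refine Finset.sum_le_sum fun j _ => ?_
          exact mul_le_mul_of_nonneg_right (Acoef_sq_le hℓ _) (by positivity)
      _ = ((3 * Real.sqrt (2*Real.pi) / Real.pi) * Real.sqrt ℓ) * ∑ j, ‖v j‖^2 := by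
          rw [Finset.mul_sum]
      _ = (3 * Real.sqrt (2*Real.pi) / Real.pi) * Real.sqrt ℓ := by rw [hvnorm, mul_one]
  -- combine
  have hπ := Real.pi_pos
  have hgsq_cont : Continuous fun φ : ℝ => ‖g φ‖^2 := hgcont.norm.pow 2
  have hIbound : ‖∫ φ in (-Real.pi)..Real.pi, (σ φ:ℂ) * (g φ * (starRingEnd ℂ) (g φ))‖
      ≤ M * (2*Real.pi * ∑ j, ‖c j‖^2) := by
    have h1 := intervalIntegral.norm_integral_le_integral_norm (μ := MeasureTheory.volume)
      (f := fun φ => (σ φ:ℂ) * (g φ * (starRingEnd ℂ) (g φ)))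
      (by linarith : -Real.pi ≤ Real.pi)
    have h2 : (∫ φ in (-Real.pi)..Real.pi, ‖(σ φ:ℂ) * (g φ * (starRingEnd ℂ) (g φ))‖)
        ≤ ∫ φ in (-Real.pi)..Real.pi, M * ‖g φ‖^2 := by
      apply intervalIntegral.integral_mono_on (by linarith)
      · exact (((Complex.continuous_ofReal.comp hσ).mul
          (hgcont.mul (Complex.continuous_conj.comp hgcont))).norm).intervalIntegrable _ _
      · exact (continuous_const.mul hgsq_cont).intervalIntegrable _ _
      · intro x _
        rw [norm_mul, norm_mul]
        have e1 : ‖((σ x:ℝ):ℂ)‖ = |σ x| := by rw [Complex.norm_real, Real.norm_eq_abs]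
        have e2 : ‖(starRingEnd ℂ) (g x)‖ = ‖g x‖ := RCLike.norm_conj _
        rw [e1, e2]
        calc |σ x| * (‖g x‖ * ‖g x‖) ≤ M * (‖g x‖ * ‖g x‖) :=
              mul_le_mul_of_nonneg_right (hM x) (by positivity)
          _ = M * ‖g x‖^2 := by ring
    calc ‖∫ φ in (-Real.pi)..Real.pi, (σ φ:ℂ) * (g φ * (starRingEnd ℂ) (g φ))‖
        ≤ ∫ φ in (-Real.pi)..Real.pi, ‖(σ φ:ℂ) * (g φ * (starRingEnd ℂ) (g φ))‖ := h1
      _ ≤ ∫ φ in (-Real.pi)..Real.pi, M * ‖g φ‖^2 := h2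
      _ = M * ∫ φ in (-Real.pi)..Real.pi, ‖g φ‖^2 := intervalIntegral.integral_const_mul _ _
      _ = M * (2*Real.pi * ∑ j, ‖c j‖^2) := by rw [step5]
  have habs : |hH.eigenvalues k| = ‖((hH.eigenvalues k : ℝ):ℂ)‖ := by
    rw [Complex.norm_real, Real.norm_eq_abs]
  have heq : ((hH.eigenvalues k : ℝ):ℂ) = ((1/(2*Real.pi) : ℝ) : ℂ) *
      ∫ φ in (-Real.pi)..Real.pi, (σ φ : ℂ) * (g φ * (starRingEnd ℂ) (g φ)) :=
    step1.trans step3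
  have hfin : |hH.eigenvalues k| ≤ (1/(2*Real.pi)) * (M * (2*Real.pi * ∑ j, ‖c j‖^2)) := by
    rw [habs, heq, norm_mul]
    have e3 : ‖((1/(2*Real.pi):ℝ):ℂ)‖ = 1/(2*Real.pi) := by
      rw [Complex.norm_real, Real.norm_eq_abs, abs_of_pos (by positivity)]
    rw [e3]
    exact mul_le_mul_of_nonneg_left hIbound (by positivity)
  calc |hH.eigenvalues k| ≤ (1/(2*Real.pi)) * (M * (2*Real.pi * ∑ j, ‖c j‖^2)) := hfin
    _ = M * ∑ j, ‖c j‖^2 := by field_simp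
    _ ≤ M * ((3 * Real.sqrt (2*Real.pi) / Real.pi) * Real.sqrt ℓ) :=
        mul_le_mul_of_nonneg_left step6 hM0

theorem eigenvalue_bound_sqrt
    (σ : ℝ → ℝ) (hσ : Continuous σ) (hper : Function.Periodic σ (2*Real.pi))
    (hH : ∀ ℓ : ℕ, (Vmat σ ℓ).IsHermitian) :
    ∃ C > 0, ∀ ℓ : ℕ, 1 ≤ ℓ → ∀ k : Fin (ℓ+1),
      |(hH ℓ).eigenvalues k| ≤ C * Real.sqrt ℓ := by
  obtain ⟨M, hM⟩ : ∃ M, ∀ x, |σ x| ≤ M := by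
    have hb := hper.isBounded_of_continuous
      ((by positivity : (0:ℝ) < 2*Real.pi).ne') hσ
    rcases isBounded_iff_forall_norm_le.1 hb with ⟨M, hM⟩
    exact ⟨M, fun x => by simpa [Real.norm_eq_abs] using hM (σ x) ⟨x, rfl⟩⟩
  have hM0 : 0 ≤ M := le_trans (abs_nonneg _) (hM 0)
  refine ⟨(M+1) * (3 * Real.sqrt (2*Real.pi) / Real.pi), ?_, ?_⟩
  · have h1 : (0:ℝ) < M+1 := by linarith
    have h2 : (0:ℝ) < 3 * Real.sqrt (2*Real.pi) / Real.pi := by positivity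
    exact mul_pos h1 h2
  · intro ℓ hℓ k
    have h := key_bound σ hσ M hM ℓ hℓ (hH ℓ) k
    have hKs : (0:ℝ) ≤ (3 * Real.sqrt (2*Real.pi) / Real.pi) * Real.sqrt ℓ := by positivity
    calc |(hH ℓ).eigenvalues k|
        ≤ M * ((3 * Real.sqrt (2*Real.pi) / Real.pi) * Real.sqrt ℓ) := h
      _ ≤ (M+1) * ((3 * Real.sqrt (2*Real.pi) / Real.pi) * Real.sqrt ℓ) := by nlinarith
      _ = (M+1) * (3 * Real.sqrt (2*Real.pi) / Real.pi) * Real.sqrt ℓ := by ring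
end

section
/- There exists a constant C > 0 such that for every integer ℓ ≥ 1, the sum over all integers m with |m| ≤ ℓ−1 and ℓ−m even of | A_{ℓ,m}² − (4/π)·(1−(m/ℓ)²)^{−1/2} | is at most C·ℓ^{2/3}. -/
set_option maxHeartbeats 1000000

open Real Finset

noncomputable def cb (k : ℕ) : ℝ := (Nat.centralBinom k : ℝ) / 4 ^ k

lemma cb_pos (k : ℕ) : 0 < cb k := by
  unfold cb
  have := Nat.centralBinom_pos k
  positivity

lemma cb_zero : cb 0 = 1 := by simp [cb, Nat.centralBinom]

lemma cb_succ (k : ℕ) : cb (k + 1) = cb k * ((2 * k + 1) / (2 * k + 2)) := by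
  have h := Nat.succ_mul_centralBinom_succ k
  have h' : ((k:ℝ) + 1) * (Nat.centralBinom (k+1) : ℝ) = 2 * (2*(k:ℝ)+1) * Nat.centralBinom k := by
    exact_mod_cast congrArg Nat.cast h
  unfold cb
  have h4 : (0:ℝ) < 4 ^ k := by positivity
  have hk1 : (0:ℝ) < (k:ℝ) + 1 := by positivity
  rw [pow_succ]
  field_simp
  nlinarith [h']

lemma W_cb (n : ℕ) : Real.Wallis.W n * ((2 * n + 1) * cb n ^ 2) = 1 := by
  induction n with
  | zero => simp [Real.Wallis.W, cb_zero]
  | succ n ih =>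
    have h1 : (0:ℝ) < 2 * n + 1 := by positivity
    have h2 : (0:ℝ) < 2 * n + 2 := by positivity
    have h3 : (0:ℝ) < 2 * n + 3 := by positivity
    calc Real.Wallis.W (n+1) * ((2 * (n+1:ℕ) + 1) * cb (n+1) ^ 2)
        = Real.Wallis.W n * ((2 * n + 1) * cb n ^ 2) := by
          rw [Real.Wallis.W_succ, cb_succ]; push_cast; field_simp; ring
      _ = 1 := ih

lemma cb_sq_le (n : ℕ) (hn : 1 ≤ n) : cb n ^ 2 ≤ 1 / (π * n) := by
  have hW := Real.Wallis.le_W n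
  have hWc := W_cb n
  have h1 : (0:ℝ) < 2 * n + 1 := by positivity
  have hn' : (1:ℝ) ≤ (n:ℝ) := by exact_mod_cast hn
  have h2 : (0:ℝ) < 2 * n + 2 := by positivity
  have hπ := Real.pi_pos
  have hsq := sq_nonneg (cb n)
  have hπn : (0:ℝ) < π * n := by positivity
  rw [le_div_iff₀ hπn]
  calc cb n ^ 2 * (π * n) ≤ cb n ^ 2 * ((2*n+1) * ((2*n+1) / (2*n+2) * (π/2))) := by
        apply mul_le_mul_of_nonneg_left _ hsq
        rw [show (2*(n:ℝ)+1) * ((2*(n:ℝ)+1) / (2*(n:ℝ)+2) * (π/2)) = (2*(n:ℝ)+1)*(2*(n:ℝ)+1)*π/(2*((2*(n:ℝ)+2))) by field_simp, le_div_iff₀ (by positivity)]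
        nlinarith
    _ ≤ cb n ^ 2 * ((2*n+1) * Real.Wallis.W n) := by
        apply mul_le_mul_of_nonneg_left _ hsq
        apply mul_le_mul_of_nonneg_left hW h1.le
    _ = 1 := by linarith [hWc]

lemma le_cb_sq (n : ℕ) : 2 / (π * (2 * n + 1)) ≤ cb n ^ 2 := by
  have hW := Real.Wallis.W_le n
  have hWc := W_cb n
  have h1 : (0:ℝ) < 2 * n + 1 := by positivity
  have hπ := Real.pi_pos
  have hsq := sq_nonneg (cb n)
  have hp : (0:ℝ) < π * (2*n+1) := by positivity
  rw [div_le_iff₀ hp]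
  nlinarith [mul_le_mul_of_nonneg_left (mul_le_mul_of_nonneg_left hW h1.le) hsq]

lemma gam_two_nat (k : ℕ) : gam (2 * k) = √π * cb k := by
  induction k with
  | zero =>
    rw [show (2 * ((0:ℕ):ℝ)) = 0 by norm_num]
    unfold gam
    rw [show (0:ℝ)/2 + 1/2 = 1/2 by norm_num, show (0:ℝ)/2 + 1 = 1 by norm_num,
      Real.Gamma_one_half_eq, Real.Gamma_one, cb_zero]
    simp
  | succ k ih =>
    have h1 : (2 * ((k+1:ℕ):ℝ)) / 2 + 1/2 = ((k:ℝ) + 1/2) + 1 := by push_cast; ring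
    have h2 : (2 * ((k+1:ℕ):ℝ)) / 2 + 1 = ((k:ℝ) + 1) + 1 := by push_cast; ring
    have h3 : (2 * ((k:ℕ):ℝ)) / 2 + 1/2 = (k:ℝ) + 1/2 := by push_cast; ring
    have h4 : (2 * ((k:ℕ):ℝ)) / 2 + 1 = (k:ℝ) + 1 := by push_cast; ring
    unfold gam at ih ⊢
    rw [h1, h2, Real.Gamma_add_one (by positivity), Real.Gamma_add_one (by positivity),
      mul_div_mul_comm]
    rw [h3, h4] at ih
    rw [ih, cb_succ]
    have hk1 : ((k:ℝ) + 1) ≠ 0 := by positivity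
    field_simp

lemma key (s t : ℕ) (hs : 1 ≤ s) (ht : 1 ≤ t) :
    |(2*((s:ℝ)+t)+1) * (cb s * cb t) - 2*((s:ℝ)+t) / (π * √((s:ℝ)*t))|
      ≤ 1/(π*√((s:ℝ)*t)) + ((s:ℝ)+t)^2/(π*((s:ℝ)*t)*√((s:ℝ)*t)) := by
  have hπ := Real.pi_pos
  set P : ℝ := (s:ℝ)*t with hP
  set L : ℝ := (s:ℝ)+t with hL
  have hs' : (1:ℝ) ≤ s := by exact_mod_cast hs
  have ht' : (1:ℝ) ≤ t := by exact_mod_cast ht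
  have hPpos : (0:ℝ) < P := by positivity
  have hL2 : (2:ℝ) ≤ L := by rw [hL]; linarith
  set p : ℝ := √P with hp
  set q : ℝ := √(P + L) with hq
  have hppos : 0 < p := Real.sqrt_pos.mpr hPpos
  have hp2 : p^2 = P := Real.sq_sqrt hPpos.le
  have hq2 : q^2 = P + L := Real.sq_sqrt (by linarith)
  have hpq : p ≤ q := Real.sqrt_le_sqrt (by linarith)
  have hqpos : 0 < q := lt_of_lt_of_le hppos hpq
  -- upper bound on cb s * cb t
  have hub : cb s * cb t ≤ 1/(π*p) := by
    have h1 : (cb s * cb t)^2 ≤ (1/(π*p))^2 := by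
      rw [mul_pow]
      calc cb s ^2 * cb t ^2 ≤ (1/(π*s)) * (1/(π*t)) := by
            apply mul_le_mul (cb_sq_le s hs) (cb_sq_le t ht) (sq_nonneg _)
            positivity
        _ = (1/(π*p))^2 := by
            rw [div_pow, mul_pow, hp2, one_pow, hP]
            rw [div_mul_div_comm]
            norm_num
            ring
    calc cb s * cb t = √((cb s * cb t)^2) := by
          rw [Real.sqrt_sq (mul_pos (cb_pos s) (cb_pos t)).le]
      _ ≤ √((1/(π*p))^2) := Real.sqrt_le_sqrt h1
      _ = 1/(π*p) := Real.sqrt_sq (by positivity)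
  -- lower bound
  have hlb : 1/(π*q) ≤ cb s * cb t := by
    have h1 : (1/(π*q))^2 ≤ (cb s * cb t)^2 := by
      rw [mul_pow]
      calc (1/(π*q))^2 = 1/(π^2*(P+L)) := by
            rw [div_pow, mul_pow, hq2, one_pow]
        _ ≤ (2/(π*(2*s+1))) * (2/(π*(2*t+1))) := by
            rw [div_mul_div_comm, div_le_div_iff₀ (by positivity) (by positivity), hP, hL]
            have hst : (2*(s:ℝ)+1)*(2*(t:ℝ)+1) ≤ 2*2*((s:ℝ)*(t:ℝ)+((s:ℝ)+(t:ℝ))) := by nlinarith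
            nlinarith [mul_le_mul_of_nonneg_left hst (sq_nonneg π)]
        _ ≤ cb s ^2 * cb t ^2 := by
            apply mul_le_mul (le_cb_sq s) (le_cb_sq t) (by positivity) (sq_nonneg _)
    calc (1:ℝ)/(π*q) = √((1/(π*q))^2) := by rw [Real.sqrt_sq (by positivity)]
      _ ≤ √((cb s * cb t)^2) := Real.sqrt_le_sqrt h1
      _ = cb s * cb t := Real.sqrt_sq (mul_pos (cb_pos s) (cb_pos t)).le
  rw [abs_le]
  have hrpos : (0:ℝ) < 1/(π*p) := by positivity
  have hr2pos : (0:ℝ) ≤ L^2/(π*P*p) := by positivity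
  constructor
  · -- lower: -(..) ≤ X - T
    have h5 : (2*L+1) * (1/(π*q)) ≤ (2*L+1)*(cb s * cb t) :=
      mul_le_mul_of_nonneg_left hlb (by linarith)
    have hqp : (q - p) * (q + p) = L := by nlinarith
    have h2pq : 2*p*(q-p) ≤ L := by nlinarith
    have e1 := mul_le_mul_of_nonneg_left h2pq (by positivity : (0:ℝ) ≤ L * p)
    have e2 := mul_le_mul_of_nonneg_left hpq (sq_nonneg L)
    have hcore : 2*L*(q*P) ≤ (2*L+1)*(p*P) + L^2*q := by
      rw [← hp2]
      nlinarith [mul_pos hppos hPpos, hppos.le, mul_pos (mul_pos hppos hppos) hppos]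
    have h6 : 2*L/(π*p) - (2*L+1)/(π*q) ≤ L^2/(π*P*p) := by
      rw [div_sub_div _ _ (by positivity : (π*p) ≠ 0) (by positivity : (π*q) ≠ 0),
        div_le_div_iff₀ (by positivity) (by positivity)]
      nlinarith [mul_le_mul_of_nonneg_left (mul_le_mul_of_nonneg_right hcore hppos.le)
        (by positivity : (0:ℝ) ≤ π^2)]
    rw [mul_one_div] at h5
    linarith
  · -- upper
    have h7 : (2*L+1)*(cb s * cb t) ≤ (2*L+1) * (1/(π*p)) :=
      mul_le_mul_of_nonneg_left hub (by linarith)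
    rw [mul_one_div] at h7
    have : (2*L+1)/(π*p) - 2*L/(π*p) = 1/(π*p) := by
      rw [div_sub_div_same]; ring_nf
    linarith

lemma sum_inv_sqrt (n : ℕ) : ∑ j ∈ range n, 1/√((j:ℝ)+1) ≤ 2*√n := by
  have h : ∀ j ∈ range n, 1/√((j:ℝ)+1) ≤ 2*(√((j:ℝ)+1) - √(j:ℝ)) := by
    intro j _
    have hb : (0:ℝ) < √((j:ℝ)+1) := Real.sqrt_pos.mpr (by positivity)
    have ha : (0:ℝ) ≤ √(j:ℝ) := Real.sqrt_nonneg _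
    have hb2 : (√((j:ℝ)+1))^2 = (j:ℝ)+1 := Real.sq_sqrt (by positivity)
    have ha2 : (√(j:ℝ))^2 = (j:ℝ) := Real.sq_sqrt (by positivity)
    rw [div_le_iff₀ hb]
    nlinarith [sq_nonneg (√((j:ℝ)+1) - √(j:ℝ))]
  calc ∑ j ∈ range n, 1/√((j:ℝ)+1) ≤ ∑ j ∈ range n, 2*(√((j:ℝ)+1) - √(j:ℝ)) :=
        Finset.sum_le_sum h
    _ = 2*√n := by
        rw [← Finset.mul_sum]
        have : ∑ j ∈ range n, (√((j:ℝ)+1) - √(j:ℝ))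
            = √((n:ℝ)) - √((0:ℕ):ℝ) := by
          have := Finset.sum_range_sub (f := fun j : ℕ => √(j:ℝ)) n
          simpa [Nat.cast_add, Nat.cast_one] using this
        rw [this]
        simp

lemma sum_inv_pow32_aux (n : ℕ) :
    ∑ j ∈ range (n+1), 1/(((j:ℝ)+1)*√((j:ℝ)+1)) ≤ 3 - 2/√((n:ℝ)+1) := by
  induction n with
  | zero => simp [Finset.sum_range_one]; norm_num
  | succ n ih =>
    rw [Finset.sum_range_succ]
    have ha : (0:ℝ) < √((n:ℝ)+1) := Real.sqrt_pos.mpr (by positivity)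
    have hb : (0:ℝ) < √((n:ℝ)+2) := Real.sqrt_pos.mpr (by positivity)
    have ha2 : (√((n:ℝ)+1))^2 = (n:ℝ)+1 := Real.sq_sqrt (by positivity)
    have hb2 : (√((n:ℝ)+2))^2 = (n:ℝ)+2 := Real.sq_sqrt (by positivity)
    have hab : √((n:ℝ)+1) ≤ √((n:ℝ)+2) := Real.sqrt_le_sqrt (by linarith)
    set a := √((n:ℝ)+1)
    set b := √((n:ℝ)+2)
    have h1 : (b - a)*(b + a) = 1 := by nlinarith
    have hkey : (2*b^2*(b-a) - a)*(a+b) = 2*b^2 - a^2 - a*b := by linear_combination 2*b^2*h1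
    have hcore : a ≤ 2*b^2*(b-a) := by nlinarith [hkey, mul_pos ha hb]
    have hstep : 1/(((n:ℝ)+1+1)*b) ≤ 2/a - 2/b := by
      have he : 2/a - 2/b = 2*(b-a)/(a*b) := by field_simp
      rw [he, div_le_div_iff₀ (by positivity) (by positivity)]
      have hn2 : (n:ℝ)+1+1 = b^2 := by rw [hb2]; ring
      rw [hn2]
      nlinarith [mul_le_mul_of_nonneg_right hcore hb.le]
    push_cast
    rw [show ((n:ℝ)+1+1) = (n:ℝ)+2 by ring]
    have hstep' : 1/(((n:ℝ)+2)*b) ≤ 2/a - 2/b := by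
      rw [show ((n:ℝ)+2) = (n:ℝ)+1+1 by ring]; exact hstep
    linarith [ih, hstep']

lemma sum_inv_pow32 (n : ℕ) : ∑ j ∈ range n, 1/(((j:ℝ)+1)*√((j:ℝ)+1)) ≤ 3 := by
  cases n with
  | zero => simp
  | succ n =>
    have := sum_inv_pow32_aux n
    have h2 : (0:ℝ) < √((n:ℝ)+1) := Real.sqrt_pos.mpr (by positivity)
    have : (0:ℝ) ≤ 2/√((n:ℝ)+1) := by positivity
    linarith [sum_inv_pow32_aux n]

lemma sum_abs_reflect (ℓ : ℕ) (f : ℤ → ℝ) (hf : ∀ k, 0 ≤ f k) :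
    ∑ m ∈ Icc (-(ℓ:ℤ)+1) ((ℓ:ℤ)-1), f ((ℓ:ℤ) - |m|) ≤ 2 * ∑ j ∈ range ℓ, f ((j:ℤ)+1) := by
  have hsplit : Icc (-(ℓ:ℤ)+1) ((ℓ:ℤ)-1) = Icc (-(ℓ:ℤ)+1) 0 ∪ Icc 1 ((ℓ:ℤ)-1) := by
    ext x; simp only [Finset.mem_Icc, Finset.mem_union]; omega
  have hdisj : Disjoint (Icc (-(ℓ:ℤ)+1) 0) (Icc 1 ((ℓ:ℤ)-1)) := by
    rw [Finset.disjoint_left]; intro a ha hb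
    simp only [Finset.mem_Icc] at ha hb; omega
  rw [hsplit, Finset.sum_union hdisj]
  have hrange : ∑ j ∈ range ℓ, f ((j:ℤ)+1) = ∑ k ∈ Icc (1:ℤ) (ℓ:ℤ), f k := by
    refine Finset.sum_nbij' (fun j => (j:ℤ)+1) (fun k => (k-1).toNat) ?_ ?_ ?_ ?_ ?_
    · intro a ha; simp only [Finset.mem_range] at ha; simp only [Finset.mem_Icc]; omega
    · intro a ha; simp only [Finset.mem_Icc] at ha; simp only [Finset.mem_range]; omega
    · intro a ha; show ((((a:ℤ)+1)-1).toNat) = a; omega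
    · intro a ha; simp only [Finset.mem_Icc] at ha; show (((a-1).toNat : ℤ)) + 1 = a; omega
    · intro a ha; rfl
  have h1 : ∑ m ∈ Icc (-(ℓ:ℤ)+1) 0, f ((ℓ:ℤ) - |m|) = ∑ k ∈ Icc (1:ℤ) (ℓ:ℤ), f k := by
    refine Finset.sum_nbij' (fun m => (ℓ:ℤ) + m) (fun k => k - (ℓ:ℤ)) ?_ ?_ ?_ ?_ ?_
    · intro a ha; simp only [Finset.mem_Icc] at ha ⊢; omega
    · intro a ha; simp only [Finset.mem_Icc] at ha ⊢; omega
    · intro a _; show (ℓ:ℤ) + a - (ℓ:ℤ) = a; ring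
    · intro a _; show (ℓ:ℤ) + (a - (ℓ:ℤ)) = a; ring
    · intro a ha; simp only [Finset.mem_Icc] at ha; congr 1; rw [abs_of_nonpos ha.2]; ring
  have h2 : ∑ m ∈ Icc (1:ℤ) ((ℓ:ℤ)-1), f ((ℓ:ℤ) - |m|) ≤ ∑ k ∈ Icc (1:ℤ) (ℓ:ℤ), f k := by
    have he : ∑ m ∈ Icc (1:ℤ) ((ℓ:ℤ)-1), f ((ℓ:ℤ) - |m|) = ∑ k ∈ Icc (1:ℤ) ((ℓ:ℤ)-1), f k := by
      refine Finset.sum_nbij' (fun m => (ℓ:ℤ) - m) (fun k => (ℓ:ℤ) - k) ?_ ?_ ?_ ?_ ?_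
      · intro a ha; simp only [Finset.mem_Icc] at ha ⊢; omega
      · intro a ha; simp only [Finset.mem_Icc] at ha ⊢; omega
      · intro a _; show (ℓ:ℤ) - ((ℓ:ℤ) - a) = a; ring
      · intro a _; show (ℓ:ℤ) - ((ℓ:ℤ) - a) = a; ring
      · intro a ha; simp only [Finset.mem_Icc] at ha; congr 1; rw [abs_of_nonneg (by omega : (0:ℤ) ≤ a)]
    rw [he]
    apply Finset.sum_le_sum_of_subset_of_nonneg
    · apply Finset.Icc_subset_Icc_right; omega
    · intro k _ _; exact hf k
  rw [hrange]
  linarith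

noncomputable def g (ℓ : ℕ) (k : ℤ) : ℝ :=
  1/(√(k:ℝ)*√(ℓ:ℝ)) + 3*√(ℓ:ℝ)/((k:ℝ)*√(k:ℝ))

lemma g_nonneg (ℓ : ℕ) (k : ℤ) : 0 ≤ g ℓ k := by
  unfold g
  rcases le_or_gt (k:ℝ) 0 with h | h
  · have : √(k:ℝ) = 0 := Real.sqrt_eq_zero'.mpr h
    simp [this]
  · positivity

lemma pointwise (ℓ : ℕ) (hℓ : 1 ≤ ℓ) (m : ℤ) (hm1 : -(ℓ:ℤ)+1 ≤ m) (hm2 : m ≤ (ℓ:ℤ)-1)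
    (hev : Even ((ℓ:ℤ) - m)) :
    |(Acoef ℓ m)^2 - (4/π) * (1 - ((m:ℝ)/(ℓ:ℝ))^2) ^ (-(1/2):ℝ)| ≤ g ℓ ((ℓ:ℤ) - |m|) := by
  have hπ := Real.pi_pos
  obtain ⟨j, hj⟩ := hev
  set s : ℕ := j.toNat with hsdef
  set t : ℕ := ℓ - s with htdef
  have hs1 : 1 ≤ s := by omega
  have ht1 : 1 ≤ t := by omega
  have hst : s + t = ℓ := by omega
  have hms : (ℓ:ℤ) - m = 2*s := by omega
  have hmt : (ℓ:ℤ) + m = 2*t := by omega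
  have hms' : (ℓ:ℝ) - (m:ℝ) = 2*(s:ℝ) := by exact_mod_cast congrArg (Int.cast : ℤ → ℝ) hms
  have hmt' : (ℓ:ℝ) + (m:ℝ) = 2*(t:ℝ) := by exact_mod_cast congrArg (Int.cast : ℤ → ℝ) hmt
  have hstR : (s:ℝ) + t = ℓ := by exact_mod_cast congrArg (Nat.cast : ℕ → ℝ) hst
  have hcbs := cb_pos s
  have hcbt := cb_pos t
  have hsp : (0:ℝ) < √π := Real.sqrt_pos.mpr hπ
  have habsc := abs_choice m
  have habs : |m| ≤ (ℓ:ℤ) := by omega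
  -- A²
  have A2 : (Acoef ℓ m)^2 = (2*(ℓ:ℝ)+1) * (cb s * cb t) := by
    unfold Acoef
    rw [if_pos ⟨habs, ⟨j, hj⟩⟩, hms', hmt', gam_two_nat s, gam_two_nat t,
      Real.sq_sqrt (by positivity)]
    rw [show (2*(ℓ:ℝ)+1)/π * (√π * cb s) * (√π * cb t)
        = (2*(ℓ:ℝ)+1) * (cb s * cb t) * (√π * √π) / π by ring,
      Real.mul_self_sqrt hπ.le]
    field_simp
  -- target
  have hPpos : (0:ℝ) < (s:ℝ)*t := by positivity
  have hsqP : (0:ℝ) < √((s:ℝ)*t) := Real.sqrt_pos.mpr hPpos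
  have hsqP2 : (√((s:ℝ)*t))^2 = (s:ℝ)*t := Real.sq_sqrt hPpos.le
  have hℓR : (0:ℝ) < (ℓ:ℝ) := by exact_mod_cast hℓ
  have hT : (4/π) * (1 - ((m:ℝ)/(ℓ:ℝ))^2) ^ (-(1/2):ℝ) = 2*(ℓ:ℝ)/(π*√((s:ℝ)*t)) := by
    have hlm : ((ℓ:ℝ)-m)*((ℓ:ℝ)+m) = 4*((s:ℝ)*t) := by rw [hms', hmt']; ring
    have he1 : (2*√((s:ℝ)*t)/(ℓ:ℝ))^2 = 4*((s:ℝ)*t)/(ℓ:ℝ)^2 := by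
      rw [div_pow, mul_pow, hsqP2]; norm_num
    have hx : 1 - ((m:ℝ)/(ℓ:ℝ))^2 = (2*√((s:ℝ)*t)/(ℓ:ℝ))^2 := by
      rw [he1]
      field_simp
      linear_combination hlm
    rw [hx]
    have hy : (0:ℝ) < 2*√((s:ℝ)*t)/(ℓ:ℝ) := by positivity
    have hrp : ((2*√((s:ℝ)*t)/(ℓ:ℝ))^2) ^ (-(1/2):ℝ) = (2*√((s:ℝ)*t)/(ℓ:ℝ))⁻¹ := by
      rw [← Real.rpow_natCast (2*√((s:ℝ)*t)/(ℓ:ℝ)) 2, ← Real.rpow_mul hy.le]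
      norm_num
      rw [Real.rpow_neg_one, inv_div]
    rw [hrp, show (2*√((s:ℝ)*t)/(ℓ:ℝ))⁻¹ = (ℓ:ℝ)/(2*√((s:ℝ)*t)) by rw [inv_div]]
    field_simp
    ring
  rw [A2, hT]
  have hk := key s t hs1 ht1
  rw [hstR] at hk
  -- now compare RHS of key with g
  set x : ℝ := (((ℓ:ℤ) - |m| : ℤ) : ℝ) with hxdef
  have hx1 : (1:ℝ) ≤ x := by
    rw [hxdef]; exact_mod_cast (by omega : (1:ℤ) ≤ (ℓ:ℤ) - |m|)
  have hxpos : (0:ℝ) < x := by linarith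
  have hμ : |(m:ℝ)| = ((|m|:ℤ):ℝ) := by rw [Int.cast_abs]
  have hxℓ : x * (ℓ:ℝ) ≤ 4*((s:ℝ)*t) := by
    have hlm : ((ℓ:ℝ)-m)*((ℓ:ℝ)+m) = 4*((s:ℝ)*t) := by rw [hms', hmt']; ring
    have habs : x = (ℓ:ℝ) - |(m:ℝ)| := by
      rw [hxdef, hμ]; push_cast; ring
    nlinarith [sq_abs (m:ℝ), abs_nonneg (m:ℝ), habs]
  have hsqx : (0:ℝ) < √x := Real.sqrt_pos.mpr hxpos
  have hsqℓ : (0:ℝ) < √(ℓ:ℝ) := Real.sqrt_pos.mpr hℓR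
  have hsqx2 : (√x)^2 = x := Real.sq_sqrt hxpos.le
  have hsqℓ2 : (√(ℓ:ℝ))^2 = (ℓ:ℝ) := Real.sq_sqrt hℓR.le
  have hsqrt_ge : √x*√(ℓ:ℝ)/2 ≤ √((s:ℝ)*t) := by
    have h1 : x*(ℓ:ℝ)/4 = (√x*√(ℓ:ℝ)/2)^2 := by
      rw [div_pow, mul_pow, hsqx2, hsqℓ2]; norm_num
    calc √x*√(ℓ:ℝ)/2 = √(x*(ℓ:ℝ)/4) := by rw [h1, Real.sqrt_sq (by positivity)]
      _ ≤ √((s:ℝ)*t) := Real.sqrt_le_sqrt (by linarith)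
  have hπ3 : (3:ℝ) < π := Real.pi_gt_three
  have B1 : 1/(π*√((s:ℝ)*t)) ≤ 1/(√x*√(ℓ:ℝ)) := by
    apply one_div_le_one_div_of_le (by positivity)
    nlinarith [hsqrt_ge]
  have B2 : (ℓ:ℝ)^2/(π*((s:ℝ)*t)*√((s:ℝ)*t)) ≤ 3*√(ℓ:ℝ)/(x*√x) := by
    rw [div_le_div_iff₀ (by positivity) (by positivity)]
    have hPP : (x*(ℓ:ℝ)/4)*(√x*√(ℓ:ℝ)/2) ≤ ((s:ℝ)*t)*√((s:ℝ)*t) := by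
      apply mul_le_mul (by linarith) hsqrt_ge (by positivity) (by positivity)
    have hll : √(ℓ:ℝ)*√(ℓ:ℝ) = (ℓ:ℝ) := Real.mul_self_sqrt hℓR.le
    have h8 : (3*√(ℓ:ℝ)*π) * ((x*(ℓ:ℝ)/4)*(√x*√(ℓ:ℝ)/2))
        ≤ (3*√(ℓ:ℝ)*π) * (((s:ℝ)*t)*√((s:ℝ)*t)) :=
      mul_le_mul_of_nonneg_left hPP (by positivity)
    have h9 : (3*√(ℓ:ℝ)*π) * ((x*(ℓ:ℝ)/4)*(√x*√(ℓ:ℝ)/2))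
        = (3*π/8)*(x*√x)*((ℓ:ℝ)*(√(ℓ:ℝ)*√(ℓ:ℝ))) := by ring
    rw [hll] at h9
    have h10 : (ℓ:ℝ)^2*(x*√x) ≤ (3*π/8)*(x*√x)*((ℓ:ℝ)*(ℓ:ℝ)) := by
      nlinarith [mul_nonneg (mul_nonneg hxpos.le hsqx.le) (mul_pos hℓR hℓR).le, hπ3]
    calc (ℓ:ℝ)^2*(x*√x) ≤ (3*π/8)*(x*√x)*((ℓ:ℝ)*(ℓ:ℝ)) := h10
      _ = (3*√(ℓ:ℝ)*π) * ((x*(ℓ:ℝ)/4)*(√x*√(ℓ:ℝ)/2)) := h9.symm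
      _ ≤ (3*√(ℓ:ℝ)*π) * (((s:ℝ)*t)*√((s:ℝ)*t)) := h8
      _ = 3*√(ℓ:ℝ)*(π*((s:ℝ)*t)*√((s:ℝ)*t)) := by ring
  unfold g
  calc |(2*(ℓ:ℝ)+1) * (cb s * cb t) - 2*(ℓ:ℝ)/(π*√((s:ℝ)*t))|
      ≤ 1/(π*√((s:ℝ)*t)) + (ℓ:ℝ)^2/(π*((s:ℝ)*t)*√((s:ℝ)*t)) := hk
    _ ≤ 1/(√x*√(ℓ:ℝ)) + 3*√(ℓ:ℝ)/(x*√x) := add_le_add B1 B2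
    _ = 1/(√((((ℓ:ℤ) - |m| : ℤ)):ℝ)*√(ℓ:ℝ)) + 3*√(ℓ:ℝ)/(((((ℓ:ℤ) - |m| : ℤ)):ℝ)*√((((ℓ:ℤ) - |m| : ℤ)):ℝ)) := by rw [hxdef]

theorem sum_Acoef_sq_minus_limit_le :
    ∃ C > 0, ∀ ℓ : ℕ, 1 ≤ ℓ →
      ∑ m ∈ (Finset.Icc (-(ℓ:ℤ) + 1) ((ℓ:ℤ) - 1)).filter (fun m => Even ((ℓ:ℤ) - m)),
        |(Acoef ℓ m)^2 - (4/Real.pi) * (1 - ((m:ℝ)/(ℓ:ℝ))^2) ^ (-(1/2) : ℝ)|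
      ≤ C * (ℓ:ℝ) ^ ((2:ℝ)/3) := by
  refine ⟨22, by norm_num, fun ℓ hℓ => ?_⟩
  have hℓR : (1:ℝ) ≤ (ℓ:ℝ) := by exact_mod_cast hℓ
  have hsqℓ : (0:ℝ) < √(ℓ:ℝ) := Real.sqrt_pos.mpr (by linarith)
  have h1 : ∑ m ∈ (Finset.Icc (-(ℓ:ℤ) + 1) ((ℓ:ℤ) - 1)).filter (fun m => Even ((ℓ:ℤ) - m)),
        |(Acoef ℓ m)^2 - (4/Real.pi) * (1 - ((m:ℝ)/(ℓ:ℝ))^2) ^ (-(1/2) : ℝ)|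
      ≤ ∑ m ∈ (Finset.Icc (-(ℓ:ℤ) + 1) ((ℓ:ℤ) - 1)).filter (fun m => Even ((ℓ:ℤ) - m)),
        g ℓ ((ℓ:ℤ) - |m|) := by
    apply Finset.sum_le_sum
    intro m hm
    rw [Finset.mem_filter, Finset.mem_Icc] at hm
    exact pointwise ℓ hℓ m hm.1.1 hm.1.2 hm.2
  have h2 : ∑ m ∈ (Finset.Icc (-(ℓ:ℤ) + 1) ((ℓ:ℤ) - 1)).filter (fun m => Even ((ℓ:ℤ) - m)),
        g ℓ ((ℓ:ℤ) - |m|) ≤ ∑ m ∈ Finset.Icc (-(ℓ:ℤ) + 1) ((ℓ:ℤ) - 1), g ℓ ((ℓ:ℤ) - |m|) :=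
    Finset.sum_le_sum_of_subset_of_nonneg (Finset.filter_subset _ _)
      (fun k _ _ => g_nonneg ℓ _)
  have h3 := sum_abs_reflect ℓ (g ℓ) (g_nonneg ℓ)
  have h4 : ∑ j ∈ range ℓ, g ℓ ((j:ℤ)+1) ≤ 2 + 9*√(ℓ:ℝ) := by
    have he : ∀ j ∈ range ℓ, g ℓ ((j:ℤ)+1)
        = (1/√((j:ℝ)+1))*(1/√(ℓ:ℝ)) + (3*√(ℓ:ℝ))*(1/(((j:ℝ)+1)*√((j:ℝ)+1))) := by
      intro j _
      unfold g
      have : (((j:ℤ)+1 : ℤ) : ℝ) = (j:ℝ)+1 := by push_cast; ring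
      rw [this]
      ring
    rw [Finset.sum_congr rfl he, Finset.sum_add_distrib, ← Finset.sum_mul, ← Finset.mul_sum]
    have ha : (∑ j ∈ range ℓ, 1/√((j:ℝ)+1)) * (1/√(ℓ:ℝ)) ≤ (2*√(ℓ:ℝ)) * (1/√(ℓ:ℝ)) := by
      apply mul_le_mul_of_nonneg_right (sum_inv_sqrt ℓ) (by positivity)
    have hb : (3*√(ℓ:ℝ)) * (∑ j ∈ range ℓ, 1/(((j:ℝ)+1)*√((j:ℝ)+1))) ≤ (3*√(ℓ:ℝ))*3 := by
      apply mul_le_mul_of_nonneg_left (sum_inv_pow32 ℓ) (by positivity)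
    have hc : (2*√(ℓ:ℝ)) * (1/√(ℓ:ℝ)) = 2 := by field_simp
    nlinarith [ha, hb, hc]
  have h5 : (4:ℝ) + 18*√(ℓ:ℝ) ≤ 22 * (ℓ:ℝ) ^ ((2:ℝ)/3) := by
    have hs1 : (1:ℝ) ≤ √(ℓ:ℝ) := by
      rw [show (1:ℝ) = √1 by simp]; exact Real.sqrt_le_sqrt hℓR
    have h6 : √(ℓ:ℝ) ≤ (ℓ:ℝ) ^ ((2:ℝ)/3) := by
      rw [Real.sqrt_eq_rpow]
      exact Real.rpow_le_rpow_of_exponent_le hℓR (by norm_num)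
    nlinarith [h6, hs1]
  calc _ ≤ ∑ m ∈ Icc (-(ℓ:ℤ)+1) ((ℓ:ℤ)-1), g ℓ ((ℓ:ℤ) - |m|) := le_trans h1 h2
    _ ≤ 2 * ∑ j ∈ range ℓ, g ℓ ((j:ℤ)+1) := h3
    _ ≤ 2 * (2 + 9*√(ℓ:ℝ)) := by linarith [h4]
    _ = 4 + 18*√(ℓ:ℝ) := by ring
    _ ≤ 22 * (ℓ:ℝ) ^ ((2:ℝ)/3) := h5
end

section
/- There exist constants C > 0 and ℓ₀ ≥ 1 such that for every integer ℓ ≥ ℓ₀ and every integer m with 0 ≤ m ≤ ℓ − ℓ^{1/3} and ℓ−m even, one has | A_{ℓ,m}² − (4/π)·(1−(m/ℓ)²)^{−1/2} | ≤ C·ℓ^{−1/3}·(1−(m/ℓ)²)^{−1/2}. -/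
open Real Finset

lemma gamma_sq_midpoint (p q : ℝ) (hp : 0 < p) (hq : 0 < q) :
    Real.Gamma ((p+q)/2) ^ 2 ≤ Real.Gamma p * Real.Gamma q := by
  have h := Real.convexOn_log_Gamma.2 (Set.mem_Ioi.2 hp) (Set.mem_Ioi.2 hq)
    (by norm_num : (0:ℝ) ≤ 1/2) (by norm_num : (0:ℝ) ≤ 1/2) (by norm_num)
  simp only [smul_eq_mul, Function.comp_apply] at h
  have hmid : (1:ℝ)/2 * p + 1/2 * q = (p+q)/2 := by ring
  rw [hmid] at h
  have h1 : 0 < Real.Gamma ((p+q)/2) := Real.Gamma_pos_of_pos (by linarith)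
  have h2 : 0 < Real.Gamma p := Real.Gamma_pos_of_pos hp
  have h3 : 0 < Real.Gamma q := Real.Gamma_pos_of_pos hq
  have hlog : Real.log (Real.Gamma ((p+q)/2) ^ 2) ≤ Real.log (Real.Gamma p * Real.Gamma q) := by
    rw [Real.log_pow, Real.log_mul h2.ne' h3.ne']
    push_cast
    linarith
  exact (Real.log_le_log_iff (by positivity) (by positivity)).1 hlog

lemma gautschi_lower (x : ℝ) (hx : 0 < x) :
    Real.sqrt x * Real.Gamma (x + 1/2) ≤ Real.Gamma (x + 1) := by
  have h := gamma_sq_midpoint x (x+1) hx (by linarith)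
  have hmid : (x + (x+1))/2 = x + 1/2 := by ring
  rw [hmid, Real.Gamma_add_one hx.ne'] at h
  have h2 : 0 < Real.Gamma x := Real.Gamma_pos_of_pos hx
  have h1 : 0 < Real.Gamma (x + 1/2) := Real.Gamma_pos_of_pos (by linarith)
  have hsq : (Real.sqrt x * Real.Gamma (x + 1/2)) ^ 2 ≤ (x * Real.Gamma x) ^ 2 := by
    rw [mul_pow, Real.sq_sqrt hx.le]
    nlinarith
  have := (pow_le_pow_iff_left₀ (by positivity) (by positivity) (two_ne_zero)).1 hsq
  rwa [Real.Gamma_add_one hx.ne']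

lemma gautschi_upper (x : ℝ) (hx : 0 < x) :
    Real.Gamma (x + 1) ≤ Real.sqrt (x + 1/2) * Real.Gamma (x + 1/2) := by
  have h := gamma_sq_midpoint (x + 1/2) (x + 3/2) (by linarith) (by linarith)
  have hmid : ((x + 1/2) + (x + 3/2))/2 = x + 1 := by ring
  rw [hmid] at h
  have h32 : Real.Gamma (x + 3/2) = (x + 1/2) * Real.Gamma (x + 1/2) := by
    have : (x : ℝ) + 3/2 = (x + 1/2) + 1 := by ring
    rw [this, Real.Gamma_add_one (by positivity)]
  rw [h32] at h
  have h1 : 0 < Real.Gamma (x + 1/2) := Real.Gamma_pos_of_pos (by linarith)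
  have hsq : Real.Gamma (x+1) ^ 2 ≤ (Real.sqrt (x + 1/2) * Real.Gamma (x + 1/2)) ^ 2 := by
    rw [mul_pow, Real.sq_sqrt (by linarith : (0:ℝ) ≤ x + 1/2)]
    nlinarith
  have hg : 0 < Real.Gamma (x+1) := Real.Gamma_pos_of_pos (by linarith)
  exact (pow_le_pow_iff_left₀ (by positivity) (by positivity) (two_ne_zero)).1 hsq

lemma gam_pos_s8 (t : ℝ) (ht : 0 < t) : 0 < gam t :=
  div_pos (Real.Gamma_pos_of_pos (by linarith)) (Real.Gamma_pos_of_pos (by linarith))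

lemma gam_mul_le (t : ℝ) (ht : 0 < t) : gam t * Real.sqrt (t/2) ≤ 1 := by
  have h := gautschi_lower (t/2) (by linarith)
  have hΓ : 0 < Real.Gamma (t/2 + 1) := Real.Gamma_pos_of_pos (by linarith)
  rw [gam, div_mul_eq_mul_div, div_le_one hΓ, mul_comm]
  exact h

lemma le_gam_mul (t : ℝ) (ht : 0 < t) : 1 ≤ gam t * Real.sqrt ((t+1)/2) := by
  have h := gautschi_upper (t/2) (by linarith)
  have hΓ : 0 < Real.Gamma (t/2 + 1) := Real.Gamma_pos_of_pos (by linarith)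
  rw [gam, div_mul_eq_mul_div, one_le_div hΓ]
  have he : (t+1)/2 = t/2 + 1/2 := by ring
  rw [he, mul_comm]
  exact h

set_option maxHeartbeats 1600000 in
theorem Acoef_sq_asymptotics :
    ∃ C > 0, ∃ ℓ₀ : ℕ, 1 ≤ ℓ₀ ∧ ∀ ℓ : ℕ, ℓ₀ ≤ ℓ → ∀ m : ℤ,
      0 ≤ m → (m:ℝ) ≤ (ℓ:ℝ) - (ℓ:ℝ) ^ ((1:ℝ)/3) → Even ((ℓ:ℤ) - m) →
      |(Acoef ℓ m)^2 - (4/Real.pi) * (1 - ((m:ℝ)/(ℓ:ℝ))^2) ^ (-(1/2) : ℝ)|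
        ≤ C * (ℓ:ℝ) ^ (-(1/3) : ℝ) * (1 - ((m:ℝ)/(ℓ:ℝ))^2) ^ (-(1/2) : ℝ) := by
  refine ⟨6, by norm_num, 1, le_refl 1, ?_⟩
  intro ℓ hℓ m hm0 hm hpar
  have hπ : (3:ℝ) < Real.pi := Real.pi_gt_three
  have hπ0 : (0:ℝ) < Real.pi := by linarith
  have hL1 : (1:ℝ) ≤ (ℓ:ℝ) := by exact_mod_cast hℓ
  have hL0 : (0:ℝ) < (ℓ:ℝ) := by linarith
  have hM0 : (0:ℝ) ≤ (m:ℝ) := by exact_mod_cast hm0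
  have ht1 : (1:ℝ) ≤ (ℓ:ℝ) ^ ((1:ℝ)/3) := Real.one_le_rpow hL1 (by norm_num)
  have hmℓR : (m:ℝ) < (ℓ:ℝ) := by linarith
  have hcond : |m| ≤ (ℓ : ℤ) ∧ Even ((ℓ:ℤ) - m) := by
    refine ⟨?_, hpar⟩
    rw [abs_of_nonneg hm0]
    exact_mod_cast hmℓR.le
  unfold Acoef
  rw [if_pos hcond]
  set L : ℝ := (ℓ:ℝ) with hLdef
  set M : ℝ := (m:ℝ) with hMdef
  set t : ℝ := L ^ ((1:ℝ)/3) with htdef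
  have ht3 : t ^ 3 = L := by
    rw [htdef, ← Real.rpow_natCast (L ^ ((1:ℝ)/3)) 3, ← Real.rpow_mul hL0.le]
    norm_num
  have ht0 : (0:ℝ) < t := by linarith
  set a : ℝ := L - M with hadef
  set b : ℝ := L + M with hbdef
  have hta : t ≤ a := by rw [hadef]; linarith
  have ha0 : (0:ℝ) < a := by linarith
  have hb0 : (0:ℝ) < b := by rw [hbdef]; linarith
  have hLb : L ≤ b := by rw [hbdef]; linarith
  have hab : a + b = 2*L := by rw [hadef, hbdef]; ring
  have hga : 0 < gam a := gam_pos_s8 a ha0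
  have hgb : 0 < gam b := gam_pos_s8 b hb0
  have hW0 : 0 ≤ (2*L+1)/Real.pi * gam a * gam b := by positivity
  rw [Real.sq_sqrt hW0]
  set S : ℝ := Real.sqrt (a*b) with hSdef
  have hS2 : S^2 = a*b := Real.sq_sqrt (by positivity)
  have hS0 : (0:ℝ) < S := Real.sqrt_pos.2 (by positivity)
  set S' : ℝ := Real.sqrt ((a+1)*(b+1)) with hS'def
  have hS'2 : S'^2 = (a+1)*(b+1) := Real.sq_sqrt (by positivity)
  have hS'0 : (0:ℝ) < S' := Real.sqrt_pos.2 (by positivity)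
  have hSS' : S ≤ S' := Real.sqrt_le_sqrt (by linarith [mul_pos ha0 hb0, ha0, hb0])
  have hbt : t^3 ≤ b := by rw [ht3]; exact hLb
  have hSt : t^2 ≤ S := by
    have h1 : t^2 = Real.sqrt ((t^2)^2) := (Real.sqrt_sq (by positivity)).symm
    rw [h1, hSdef]
    apply Real.sqrt_le_sqrt
    linarith [mul_nonneg (sub_nonneg.2 hta) hb0.le, mul_nonneg (sub_nonneg.2 hbt) ht0.le]
  have heq : S'^2 = S^2 + (2*L+1) := by
    rw [hS2, hS'2]
    linear_combination hab
  -- rewrite rpow terms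
  have hML : M / L < 1 := (div_lt_one hL0).2 hmℓR
  have hu : 1 - (M/L)^2 = a*b/L^2 := by
    rw [hadef, hbdef]; field_simp; ring
  have hrw : (1 - (M/L)^2) ^ (-(1/2) : ℝ) = L / S := by
    rw [hu, Real.rpow_neg (by positivity), ← Real.sqrt_eq_rpow,
      Real.sqrt_div (by positivity : (0:ℝ) ≤ a*b), Real.sqrt_sq hL0.le, ← hSdef, inv_div]
  have hrw2 : L ^ (-(1/3) : ℝ) = t⁻¹ := by
    rw [show (-(1/3) : ℝ) = -((1:ℝ)/3) by norm_num, Real.rpow_neg hL0.le, htdef]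
  rw [hrw, hrw2]
  -- bounds on gam a * gam b
  have hG_ub : gam a * gam b * S ≤ 2 := by
    have h1 := gam_mul_le a ha0
    have h2 := gam_mul_le b hb0
    have h3 : (gam a * Real.sqrt (a/2)) * (gam b * Real.sqrt (b/2)) ≤ 1 := by
      calc (gam a * Real.sqrt (a/2)) * (gam b * Real.sqrt (b/2)) ≤ 1 * 1 :=
            mul_le_mul h1 h2 (by positivity) zero_le_one
        _ = 1 := by norm_num
    have h4 : Real.sqrt (a/2) * Real.sqrt (b/2) = S/2 := by
      rw [← Real.sqrt_mul (by positivity), show a/2*(b/2) = a*b/(2^2) by ring,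
        Real.sqrt_div (by positivity : (0:ℝ) ≤ a*b), Real.sqrt_sq (by norm_num : (0:ℝ) ≤ 2),
        ← hSdef]
    have h5 : gam a * gam b * (S/2) ≤ 1 := by
      rw [← h4, show gam a * gam b * (Real.sqrt (a/2) * Real.sqrt (b/2))
        = (gam a * Real.sqrt (a/2)) * (gam b * Real.sqrt (b/2)) from by ring]
      exact h3
    linarith
  have hG_lb : 2 ≤ gam a * gam b * S' := by
    have h1 := le_gam_mul a ha0
    have h2 := le_gam_mul b hb0
    have h3 : 1 ≤ (gam a * Real.sqrt ((a+1)/2)) * (gam b * Real.sqrt ((b+1)/2)) :=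
      le_trans h2 (le_mul_of_one_le_left (by positivity) h1)
    have h4 : Real.sqrt ((a+1)/2) * Real.sqrt ((b+1)/2) = S'/2 := by
      rw [← Real.sqrt_mul (by positivity), show (a+1)/2*((b+1)/2) = (a+1)*(b+1)/(2^2) by ring,
        Real.sqrt_div (by positivity : (0:ℝ) ≤ (a+1)*(b+1)),
        Real.sqrt_sq (by norm_num : (0:ℝ) ≤ 2), ← hS'def]
    have h5 : 1 ≤ gam a * gam b * (S'/2) := by
      rw [← h4, show gam a * gam b * (Real.sqrt ((a+1)/2) * Real.sqrt ((b+1)/2))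
        = (gam a * Real.sqrt ((a+1)/2)) * (gam b * Real.sqrt ((b+1)/2)) from by ring]
      exact h3
    linarith
  have ht3t : (0:ℝ) ≤ t^3 - 1 := by
    linarith [mul_nonneg (sub_nonneg.2 ht1) (show (0:ℝ) ≤ t^2+t+1 by positivity)]
  have hd : 2*t^2*(S'-S) ≤ 2*L+1 := by
    linarith [mul_nonneg (show (0:ℝ) ≤ S' + S - 2*t^2 by linarith)
      (show (0:ℝ) ≤ S' - S by linarith), heq]
  rw [abs_le]
  constructor
  · -- lower bound
    rw [neg_le_sub_iff_le_add]
    have hX : (2*L+1)/Real.pi * (2/S') ≤ (2*L+1)/Real.pi * gam a * gam b := by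
      rw [mul_assoc]
      exact mul_le_mul_of_nonneg_left ((div_le_iff₀ hS'0).2 hG_lb) (by positivity)
    have key : 4/Real.pi * (L/S) - (2*L+1)/Real.pi * (2/S') ≤ 6 * t⁻¹ * (L/S) := by
      have e1 : 4/Real.pi * (L/S) - (2*L+1)/Real.pi * (2/S')
          = (4*L*S' - 2*(2*L+1)*S) / (Real.pi*S*S') := by
        field_simp
      have e2 : 6 * t⁻¹ * (L/S) = 6*L/(t*S) := by
        field_simp
      rw [e1, e2, div_le_div_iff₀ (by positivity) (by positivity)]
      rw [← ht3] at hd ⊢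
      have c1 := mul_le_mul_of_nonneg_left hd (show (0:ℝ) ≤ 2*t^2*S by positivity)
      have hd6 : S * t^2 ≤ S * S' := mul_le_mul_of_nonneg_left (le_trans hSt hSS') hS0.le
      have c2 := mul_le_mul_of_nonneg_left hd6 (show (0:ℝ) ≤ 18*t^3 by positivity)
      have c3 : (0:ℝ) ≤ (Real.pi - 3) * (6*t^3*S*S') := mul_nonneg (by linarith) (by positivity)
      have c4 : (0:ℝ) ≤ (t^3 - 1) * (2*t^2*S) := mul_nonneg ht3t (by positivity)
      have c5 : (0:ℝ) ≤ 2*t*S^2 := by positivity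
      have c6 : (0:ℝ) ≤ Real.pi * t^3 * S * S' := by positivity
      linarith [c1, c2, c3, c4, c5, c6]
    linarith [key, hX]
  · -- upper bound
    have hX : (2*L+1)/Real.pi * gam a * gam b ≤ (2*L+1)/Real.pi * (2/S) := by
      rw [mul_assoc]
      exact mul_le_mul_of_nonneg_left ((le_div_iff₀ hS0).2 hG_ub) (by positivity)
    have key : (2*L+1)/Real.pi * (2/S) - 4/Real.pi * (L/S) ≤ 6 * t⁻¹ * (L/S) := by
      have e1 : (2*L+1)/Real.pi * (2/S) - 4/Real.pi * (L/S) = 2/(Real.pi*S) := by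
        field_simp; ring
      have e2 : 6 * t⁻¹ * (L/S) = 6*L/(t*S) := by
        field_simp
      rw [e1, e2, div_le_div_iff₀ (by positivity) (by positivity)]
      rw [← ht3]
      have c3 : (0:ℝ) ≤ (Real.pi - 3) * (6*t^3*S) := mul_nonneg (by linarith) (by positivity)
      have htt : (0:ℝ) ≤ t^3 - t := by
        linarith [mul_nonneg (mul_nonneg ht0.le (sub_nonneg.2 ht1))
          (show (0:ℝ) ≤ t + 1 by linarith)]
      have c4 : (0:ℝ) ≤ (t^3 - t) * (2*S) := mul_nonneg htt (by positivity)
      have c7 : (0:ℝ) ≤ t^3 * S := by positivity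
      linarith [c3, c4, c7]
    linarith
end

section
/- Let n ≥ 1 and let A and B be Hermitian n×n complex matrices, with eigenvalues λ_1(A) ≤ … ≤ λ_n(A), λ_1(B) ≤ … ≤ λ_n(B), and let μ_1, …, μ_n be the eigenvalues of A − B, all listed with multiplicity. Let f : ℝ → ℝ be differentiable with |f′(t)| ≤ L for all t ∈ ℝ, where L ≥ 0. Then | Σ_{j=1}^{n} f(λ_j(A)) − Σ_{j=1}^{n} f(λ_j(B)) | ≤ L · Σ_{j=1}^{n} |μ_j|. (The right-hand side is L times the trace norm of A − B.) -/
/-!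
Split `C = A - B` as `C = C⁺ - C⁻` with `C⁺, C⁻ ≥ 0` and `tr C⁺ + tr C⁻ = tr |C| = ∑ |μ_j|`.
In the Loewner order both `A` and `B` lie between `B - C⁻` and `B + C⁺`, so by Weyl's
monotonicity principle (a Courant–Fischer dimension count) the `k`-th eigenvalues of `A` and `B`
both lie in `[λ_k(B - C⁻), λ_k(B + C⁺)]`. Summing the lengths of these intervals gives
`tr (B + C⁺) - tr (B - C⁻) = ∑ |μ_j|`, and `f` is `L`-Lipschitz by the mean value theorem.
-/

open Finset Module Submodule RCLike
open scoped InnerProductSpace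

theorem Module.Basis.finrank_span_image {ι R M : Type*} [Ring R] [Nontrivial R]
    [StrongRankCondition R] [AddCommGroup M] [Module R M] (b : Basis ι R M) (s : Finset ι) :
    finrank R (span R (b '' s)) = s.card := by
  classical
  have hli : LinearIndepOn R id (b '' s) := (b.linearIndependent.linearIndepOn _).id_image
  rw [← coe_image] at hli ⊢
  rw [finrank_span_finset_eq_card hli, card_image_of_injective _ b.injective]

theorem OrthonormalBasis.repr_eq_zero_of_mem_span_image {ι 𝕜 E : Type*} [Fintype ι] [RCLike 𝕜]
    [NormedAddCommGroup E] [InnerProductSpace 𝕜 E] (b : OrthonormalBasis ι 𝕜 E) {s : Set ι}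
    {x : E} (hx : x ∈ span 𝕜 (b '' s)) {i : ι} (hi : i ∉ s) : b.repr x i = 0 := by
  rw [← b.coe_toBasis] at hx
  rw [← b.coe_toBasis_repr_apply]
  exact Finsupp.notMem_support_iff.mp fun h => hi (b.toBasis.mem_span_image.mp hx h)

namespace LinearMap.IsSymmetric

variable {𝕜 E : Type*} [RCLike 𝕜] [NormedAddCommGroup E] [InnerProductSpace 𝕜 E]
  [FiniteDimensional 𝕜 E] {T S : E →ₗ[𝕜] E} {n : ℕ} (hT : T.IsSymmetric) (hn : finrank 𝕜 E = n)

theorem re_inner_apply_self_eq_sum (x : E) :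
    re ⟪T x, x⟫_𝕜 = ∑ i, hT.eigenvalues hn i * ‖(hT.eigenvectorBasis hn).repr x i‖ ^ 2 := by
  rw [← (hT.eigenvectorBasis hn).repr.inner_map_map, PiLp.inner_apply, map_sum]
  refine sum_congr rfl fun i _ => ?_
  rw [eigenvectorBasis_apply_self_apply, ← smul_eq_mul, inner_smul_left, conj_ofReal,
    inner_self_eq_norm_sq_to_K, ← ofReal_pow, ← ofReal_mul, ofReal_re]

theorem re_inner_apply_self_le_of_mem_span {s : Finset (Fin n)} {c : ℝ}
    (hc : ∀ i ∈ s, hT.eigenvalues hn i ≤ c) {x : E}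
    (hx : x ∈ span 𝕜 (hT.eigenvectorBasis hn '' s)) : re ⟪T x, x⟫_𝕜 ≤ c * ‖x‖ ^ 2 := by
  rw [re_inner_apply_self_eq_sum, ← (hT.eigenvectorBasis hn).repr.norm_map,
    EuclideanSpace.norm_sq_eq, mul_sum]
  refine sum_le_sum fun i _ => ?_
  by_cases hi : i ∈ s
  · exact mul_le_mul_of_nonneg_right (hc i hi) (sq_nonneg _)
  · simp [(hT.eigenvectorBasis hn).repr_eq_zero_of_mem_span_image hx hi]

theorem le_re_inner_apply_self_of_mem_span {s : Finset (Fin n)} {c : ℝ}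
    (hc : ∀ i ∈ s, c ≤ hT.eigenvalues hn i) {x : E}
    (hx : x ∈ span 𝕜 (hT.eigenvectorBasis hn '' s)) : c * ‖x‖ ^ 2 ≤ re ⟪T x, x⟫_𝕜 := by
  rw [re_inner_apply_self_eq_sum, ← (hT.eigenvectorBasis hn).repr.norm_map,
    EuclideanSpace.norm_sq_eq, mul_sum]
  refine sum_le_sum fun i _ => ?_
  by_cases hi : i ∈ s
  · exact mul_le_mul_of_nonneg_right (hc i hi) (sq_nonneg _)
  · simp [(hT.eigenvectorBasis hn).repr_eq_zero_of_mem_span_image hx hi]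

theorem eigenvalues_le_eigenvalues_of_le (hS : S.IsSymmetric) (hTS : T ≤ S) (k : Fin n) :
    hT.eigenvalues hn k ≤ hS.eigenvalues hn k := by
  obtain ⟨x, hxT, hxS, hx0⟩ : ∃ x ∈ span 𝕜 (hT.eigenvectorBasis hn '' Iic k),
      x ∈ span 𝕜 (hS.eigenvectorBasis hn '' Ici k) ∧ x ≠ 0 := by
    by_contra! h
    have := finrank_add_finrank_le_of_disjoint (disjoint_def.mpr h)
    rw [← OrthonormalBasis.coe_toBasis, ← OrthonormalBasis.coe_toBasis, Basis.finrank_span_image,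
      Basis.finrank_span_image, Fin.card_Iic, Fin.card_Ici, hn] at this
    omega
  have hT_ge := hT.le_re_inner_apply_self_of_mem_span hn
    (fun i hi => hT.eigenvalues_antitone hn (mem_Iic.mp hi)) hxT
  have hS_le := hS.re_inner_apply_self_le_of_mem_span hn
    (fun i hi => hS.eigenvalues_antitone hn (mem_Ici.mp hi)) hxS
  have hTS_x : re ⟪T x, x⟫_𝕜 ≤ re ⟪S x, x⟫_𝕜 := by
    simpa [inner_sub_left] using hTS.re_inner_nonneg_left x
  have hx : 0 < ‖x‖ ^ 2 := by positivity
  exact le_of_mul_le_mul_right (hT_ge.trans (hTS_x.trans hS_le)) hx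

end LinearMap.IsSymmetric

namespace Matrix.IsHermitian

open scoped MatrixOrder ComplexOrder

variable {𝕜 ι : Type*} [RCLike 𝕜] [Fintype ι] [DecidableEq ι] {A B : Matrix ι ι 𝕜}

-- `eigenvalues` is the antitone `eigenvalues₀` composed with an arbitrary bijection: unsorted.
theorem sum_comp_eigenvalues {M : Type*} [AddCommMonoid M] (hA : A.IsHermitian) (g : ℝ → M) :
    ∑ i, g (hA.eigenvalues i) = ∑ k, g (hA.eigenvalues₀ k) :=
  Equiv.sum_comp _ (fun k => g (hA.eigenvalues₀ k))

theorem re_trace_eq_sum_eigenvalues₀ (hA : A.IsHermitian) :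
    re A.trace = ∑ k, hA.eigenvalues₀ k := by
  rw [hA.trace_eq_sum_eigenvalues, map_sum]
  simpa using hA.sum_comp_eigenvalues id

theorem trace_cfc (hA : A.IsHermitian) (f : ℝ → ℝ) :
    (cfc f A).trace = ∑ i, (f (hA.eigenvalues i) : 𝕜) := by
  rw [hA.cfc_eq, IsHermitian.cfc, Unitary.conjStarAlgAut_apply, trace_mul_cycle,
    Unitary.coe_star_mul_self, one_mul, trace_diagonal]
  rfl

theorem re_trace_abs (hA : A.IsHermitian) : re (CFC.abs A).trace = ∑ i, |hA.eigenvalues i| := by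
  simp [CFC.abs_eq_cfc_norm A hA, hA.trace_cfc]

theorem eigenvalues₀_le_eigenvalues₀_of_le (hA : A.IsHermitian) (hB : B.IsHermitian)
    (hAB : A ≤ B) (k : Fin (Fintype.card ι)) : hA.eigenvalues₀ k ≤ hB.eigenvalues₀ k :=
  LinearMap.IsSymmetric.eigenvalues_le_eigenvalues_of_le _ _ _
    (by rwa [LinearMap.le_def, ← map_sub, isPositive_toEuclideanLin_iff]) k

theorem sum_abs_sub_eigenvalues₀_le (hA : A.IsHermitian) (hB : B.IsHermitian) :
    ∑ k, |hA.eigenvalues₀ k - hB.eigenvalues₀ k| ≤ ∑ i, |(hA.sub hB).eigenvalues i| := by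
  set C := A - B
  have hC : C.IsHermitian := hA.sub hB
  have hP : 0 ≤ C⁺ := CFC.posPart_nonneg C
  have hN : 0 ≤ C⁻ := CFC.negPart_nonneg C
  have hA_eq : A = B + C⁺ - C⁻ := by
    rw [add_sub_assoc, CFC.posPart_sub_negPart C hC, add_sub_cancel]
  have hU : (B + C⁺).IsHermitian := hB.add (nonneg_iff_posSemidef.mp hP).isHermitian
  have hL : (B - C⁻).IsHermitian := hB.sub (nonneg_iff_posSemidef.mp hN).isHermitian
  have hLA : B - C⁻ ≤ A := by rw [hA_eq]; exact sub_le_sub_right (le_add_of_nonneg_right hP) _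
  have hAU : A ≤ B + C⁺ := by rw [hA_eq]; exact sub_le_self _ hN
  have hLB : B - C⁻ ≤ B := sub_le_self _ hN
  have hBU : B ≤ B + C⁺ := le_add_of_nonneg_right hP
  calc ∑ k, |hA.eigenvalues₀ k - hB.eigenvalues₀ k|
      ≤ ∑ k, (hU.eigenvalues₀ k - hL.eigenvalues₀ k) := by
        refine sum_le_sum fun k _ => abs_sub_le_iff.mpr ⟨?_, ?_⟩
        · linarith [eigenvalues₀_le_eigenvalues₀_of_le hA hU hAU k,
            eigenvalues₀_le_eigenvalues₀_of_le hL hB hLB k]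
        · linarith [eigenvalues₀_le_eigenvalues₀_of_le hB hU hBU k,
            eigenvalues₀_le_eigenvalues₀_of_le hL hA hLA k]
    _ = re (CFC.abs C).trace := by
        rw [sum_sub_distrib, ← re_trace_eq_sum_eigenvalues₀, ← re_trace_eq_sum_eigenvalues₀,
          ← map_sub, ← trace_sub, ← CFC.posPart_add_negPart C hC, add_sub_sub_cancel]
    _ = ∑ i, |hC.eigenvalues i| := hC.re_trace_abs

end Matrix.IsHermitian

theorem trace_lipschitz_bound_general
    {n : ℕ} (A B : Matrix (Fin n) (Fin n) ℂ)
    (hA : A.IsHermitian) (hB : B.IsHermitian)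
    (f : ℝ → ℝ) (L : ℝ) (hL : 0 ≤ L)
    (hf : Differentiable ℝ f) (hf' : ∀ t : ℝ, |deriv f t| ≤ L) :
    |∑ j, f (hA.eigenvalues j) - ∑ j, f (hB.eigenvalues j)|
      ≤ L * ∑ j, |(hA.sub hB).eigenvalues j| := by
  have hlip : LipschitzWith L.toNNReal f :=
    lipschitzWith_of_nnnorm_deriv_le hf fun t => by
      rw [← NNReal.coe_le_coe, coe_nnnorm, Real.norm_eq_abs, Real.coe_toNNReal _ hL]; exact hf' t
  rw [hA.sum_comp_eigenvalues f, hB.sum_comp_eigenvalues f, ← sum_sub_distrib]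
  calc |∑ k, (f (hA.eigenvalues₀ k) - f (hB.eigenvalues₀ k))|
      ≤ ∑ k, |f (hA.eigenvalues₀ k) - f (hB.eigenvalues₀ k)| := abs_sum_le_sum_abs _ _
    _ ≤ ∑ k, L * |hA.eigenvalues₀ k - hB.eigenvalues₀ k| :=
        sum_le_sum fun k _ => by simpa [Real.dist_eq, hL] using hlip.dist_le_mul _ _
    _ = L * ∑ k, |hA.eigenvalues₀ k - hB.eigenvalues₀ k| := (mul_sum _ _ _).symm
    _ ≤ L * ∑ j, |(hA.sub hB).eigenvalues j| :=
        mul_le_mul_of_nonneg_left (hA.sum_abs_sub_eigenvalues₀_le hB) hL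

theorem trace_lipschitz_bound
    {n : ℕ} (hn : 1 ≤ n) (A B : Matrix (Fin n) (Fin n) ℂ)
    (hA : A.IsHermitian) (hB : B.IsHermitian)
    (f : ℝ → ℝ) (L : ℝ) (hL : 0 ≤ L)
    (hf : Differentiable ℝ f) (hf' : ∀ t : ℝ, |deriv f t| ≤ L) :
    |∑ j, f (hA.eigenvalues j) - ∑ j, f (hB.eigenvalues j)|
      ≤ L * ∑ j, |(hA.sub hB).eigenvalues j| :=
  trace_lipschitz_bound_general A B hA hB f L hL hf hf'
end

section
/- Let σ : ℝ → ℝ be C¹, 2π-periodic, and satisfy σ(φ+π) = σ(φ) for all φ, and let ω ∈ C^∞(ℝ) have compact support contained in (−1,1). For ℓ ≥ 2 define the trigonometric polynomial ω_ℓ(φ) = Σ_{|m|≤ℓ−2, ℓ−m even} ω(m/ℓ)·e^{imφ}. Then there exists a constant C > 0 such that for every integer ℓ ≥ 2, ∫_{−π}^{π} ∫_{−π}^{π} |ω_ℓ(φ−φ′)|² · |σ(φ)−σ(φ′)|² dφ dφ′ ≤ C. (This integral is the squared Hilbert–Schmidt norm of the commutator of multiplication by σ and convolution with ω_ℓ on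 L² of the circle.) -/
open Real Finset

lemma abs_exp_two (t : ℝ) :
    ‖Complex.exp (Complex.I * 2 * (t:ℂ)) - 1‖ = 2 * |Real.sin t| := by
  have h : Complex.I * 2 * (t:ℂ) = ((2*t : ℝ):ℂ) * Complex.I := by push_cast; ring
  rw [h, Complex.exp_mul_I, ← Complex.ofReal_cos, ← Complex.ofReal_sin]
  have h2 : (↑(Real.cos (2*t)) + ↑(Real.sin (2*t)) * Complex.I - 1)
      = ↑(Real.cos (2*t) - 1) + ↑(Real.sin (2*t)) * Complex.I := by push_cast; ring
  rw [h2, Complex.norm_add_mul_I]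
  have key : (Real.cos (2*t) - 1)^2 + Real.sin (2*t)^2 = (2*|Real.sin t|)^2 := by
    have h1 : Real.sin (2*t)^2 + Real.cos (2*t)^2 = 1 := Real.sin_sq_add_cos_sq _
    have h3 : Real.cos (2*t) = 2 * Real.cos t ^2 - 1 := Real.cos_two_mul t
    have h4 : Real.sin t^2 + Real.cos t^2 = 1 := Real.sin_sq_add_cos_sq t
    rw [mul_pow, sq_abs]; nlinarith
  rw [key, Real.sqrt_sq (by positivity)]

/-- The trigonometric polynomial ω_ℓ(φ) = Σ_{|m|≤ℓ−2, ℓ−m even} ω(m/ℓ)·e^{imφ}. -/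
noncomputable def omegaPoly (ω : ℝ → ℝ) (ℓ : ℕ) (φ : ℝ) : ℂ :=
  ∑ m ∈ (Finset.Icc (-(ℓ:ℤ) + 2) ((ℓ:ℤ) - 2)).filter (fun m => Even ((ℓ:ℤ) - m)),
    (ω ((m:ℝ)/(ℓ:ℝ)) : ℂ) * Complex.exp (Complex.I * (m : ℂ) * (φ : ℂ))

lemma sigma_bound (σ : ℝ → ℝ) (hσ : ContDiff ℝ 1 σ)
    (hπper : ∀ φ : ℝ, σ (φ + Real.pi) = σ φ) :
    ∃ M > 0, ∀ a b : ℝ, |σ a - σ b|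
      ≤ M * ‖Complex.exp (Complex.I * 2 * ((a - b : ℝ):ℂ)) - 1‖ := by
  have hπ : Function.Periodic σ Real.pi := hπper
  have hdper : Function.Periodic (deriv σ) Real.pi := by
    intro x
    have hfun : (fun y => σ (y + Real.pi)) = σ := funext hπper
    have : deriv (fun y => σ (y + Real.pi)) x = deriv σ (x + Real.pi) :=
      deriv_comp_add_const σ Real.pi x
    rw [hfun] at this
    exact this.symm
  have hdcont : Continuous (deriv σ) := hσ.continuous_deriv le_rfl
  obtain ⟨K0, hK0⟩ := Bornology.IsBounded.exists_norm_le
    (hdper.isBounded_of_continuous Real.pi_ne_zero hdcont)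
  set K : ℝ := max K0 0 with hK
  have hKnn : 0 ≤ K := le_max_right _ _
  have hKb : ∀ x : ℝ, ‖deriv σ x‖ ≤ K := fun x =>
    (hK0 _ (Set.mem_range_self x)).trans (le_max_left _ _)
  have hlip : ∀ x y : ℝ, |σ x - σ y| ≤ K * |x - y| := by
    intro x y
    have := Convex.norm_image_sub_le_of_norm_deriv_le
      (fun z _ => (hσ.differentiable (by norm_num)).differentiableAt)
      (fun z _ => hKb z) (convex_univ) (Set.mem_univ y) (Set.mem_univ x)
    simpa [Real.norm_eq_abs] using this
  refine ⟨(K + 1) * (Real.pi / 4), by positivity, ?_⟩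
  intro a b
  set t : ℝ := a - b with ht
  set k : ℤ := round (t / Real.pi) with hk
  set t' : ℝ := t - k * Real.pi with ht'
  have hσb : σ b = σ (a - t') := by
    have : a - t' = b + k * Real.pi := by rw [ht', ht]; ring
    rw [this]
    exact ((hπ.int_mul k) b).symm
  have ht'le : |t'| ≤ Real.pi / 2 := by
    have h1 : |t / Real.pi - k| ≤ 1 / 2 := abs_sub_round (t / Real.pi)
    have h2 : t' = Real.pi * (t / Real.pi - k) := by
      rw [ht']
      field_simp
    rw [h2, abs_mul, abs_of_pos Real.pi_pos]
    calc Real.pi * |t / Real.pi - k| ≤ Real.pi * (1/2) := by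
          exact mul_le_mul_of_nonneg_left h1 Real.pi_pos.le
      _ = Real.pi / 2 := by ring
  have hsin : |Real.sin t'| = |Real.sin t| := by
    rw [ht', Real.sin_sub_int_mul_pi, abs_mul]
    have hone : |((-1:ℝ)) ^ k| = 1 := by
      rcases Int.even_or_odd k with h | h
      · rw [h.neg_one_zpow]; simp
      · rw [h.neg_one_zpow]; simp
    rw [hone, one_mul]
  have hjordan : |t'| ≤ (Real.pi / 2) * |Real.sin t'| := by
    have := Real.mul_abs_le_abs_sin (x := t') ht'le
    calc |t'| = (Real.pi / 2) * (2 / Real.pi * |t'|) := by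
          field_simp
      _ ≤ (Real.pi / 2) * |Real.sin t'| := by
          exact mul_le_mul_of_nonneg_left this (by positivity)
  calc |σ a - σ b| = |σ a - σ (a - t')| := by rw [hσb]
    _ ≤ K * |a - (a - t')| := hlip _ _
    _ = K * |t'| := by
        have h5 : a - (a - t') = t' := by ring
        rw [h5]
    _ ≤ K * ((Real.pi / 2) * |Real.sin t'|) := mul_le_mul_of_nonneg_left hjordan hKnn
    _ = K * (Real.pi / 4) * (2 * |Real.sin t|) := by rw [hsin]; ring
    _ ≤ (K + 1) * (Real.pi / 4) * (2 * |Real.sin t|) := by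
        apply mul_le_mul_of_nonneg_right _ (by positivity)
        apply mul_le_mul_of_nonneg_right _ (by positivity)
        linarith
    _ = (K + 1) * (Real.pi / 4) * ‖Complex.exp (Complex.I * 2 * ((a - b : ℝ):ℂ)) - 1‖ := by
        rw [abs_exp_two, ht]
lemma omegaPoly_mul_bound (ω : ℝ → ℝ) (L : ℝ) (hL : 0 ≤ L)
    (hlip : ∀ x y : ℝ, |ω x - ω y| ≤ L * |x - y|)
    (hω0 : ∀ x : ℝ, 1 ≤ |x| → ω x = 0)
    (ℓ : ℕ) (hℓ : 2 ≤ ℓ) (ψ : ℝ) :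
    ‖omegaPoly ω ℓ ψ * (Complex.exp (Complex.I * 2 * (ψ:ℂ)) - 1)‖ ≤ 7 * L := by
  set n : ℤ := (ℓ : ℤ) with hn
  have hn2 : (2:ℤ) ≤ n := by rw [hn]; exact_mod_cast hℓ
  have hℓpos : (0:ℝ) < (ℓ:ℝ) := by positivity
  set c : ℤ → ℂ := fun m => ((ω ((m:ℝ)/(ℓ:ℝ)) : ℝ) : ℂ) with hc
  set E : ℤ → ℂ := fun m => Complex.exp (Complex.I * (m:ℂ) * (ψ:ℂ)) with hE
  set S : Finset ℤ := (Finset.Icc (-n + 2) (n - 2)).filter (fun m => Even (n - m)) with hS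
  set S' : Finset ℤ := (Finset.Icc (-n + 4) n).filter (fun m => Even (n - m)) with hS'
  set T : Finset ℤ := (Finset.Icc (-n) (n + 2)).filter (fun m => Even (n - m)) with hT
  -- c vanishes for |m| ≥ n
  have hc0 : ∀ m : ℤ, (m ≤ -n ∨ n ≤ m) → c m = 0 := by
    intro m hm
    have : (1:ℝ) ≤ |(m:ℝ)/(ℓ:ℝ)| := by
      rw [abs_div, abs_of_pos hℓpos, le_div_iff₀ hℓpos, one_mul]
      have : (ℓ:ℝ) ≤ |(m:ℝ)| := by
        rcases hm with h | h
        · rw [abs_of_nonpos (by exact_mod_cast le_trans h (by omega))]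
          push_cast
          have : (n:ℝ) ≤ -(m:ℝ) := by exact_mod_cast (by omega : n ≤ -m)
          simpa [hn] using this
        · calc (ℓ:ℝ) = (n:ℝ) := by simp [hn]
          _ ≤ (m:ℝ) := by exact_mod_cast h
          _ ≤ |(m:ℝ)| := le_abs_self _
      exact this
    simp [hc, hω0 _ this]
  -- step 1: expand
  have step1 : omegaPoly ω ℓ ψ * (Complex.exp (Complex.I * 2 * (ψ:ℂ)) - 1)
      = (∑ m ∈ S, c m * E (m + 2)) - ∑ m ∈ S, c m * E m := by
    rw [omegaPoly, ← Finset.sum_sub_distrib, Finset.sum_mul]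
    apply Finset.sum_congr rfl
    intro m hm
    have hEe : E m * Complex.exp (Complex.I * 2 * (ψ:ℂ)) = E (m + 2) := by
      rw [hE, ← Complex.exp_add]
      congr 1
      push_cast
      ring
    calc c m * E m * (Complex.exp (Complex.I * 2 * (ψ:ℂ)) - 1)
        = c m * (E m * Complex.exp (Complex.I * 2 * (ψ:ℂ))) - c m * E m := by ring
      _ = c m * E (m + 2) - c m * E m := by rw [hEe]
  -- step 2: reindex
  have step2 : (∑ m ∈ S, c m * E (m + 2)) = ∑ m ∈ S', c (m - 2) * E m := by
    apply Finset.sum_nbij' (i := fun m => m + 2) (j := fun m => m - 2)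
    · intro a ha
      simp only [hS, hS', Finset.mem_filter, Finset.mem_Icc] at ha ⊢
      obtain ⟨⟨h1, h2⟩, k, hk⟩ := ha
      exact ⟨⟨by omega, by omega⟩, ⟨k - 1, by omega⟩⟩
    · intro a ha
      simp only [hS, hS', Finset.mem_filter, Finset.mem_Icc] at ha ⊢
      obtain ⟨⟨h1, h2⟩, k, hk⟩ := ha
      exact ⟨⟨by omega, by omega⟩, ⟨k + 1, by omega⟩⟩
    · intro a _; ring
    · intro a _; ring
    · intro a _; simp
  -- step 3: extend to T
  have hsub' : S' ⊆ T := by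
    intro m hm
    simp only [hS', hT, Finset.mem_filter, Finset.mem_Icc] at hm ⊢
    exact ⟨⟨by omega, by omega⟩, hm.2⟩
  have step3 : (∑ m ∈ S', c (m - 2) * E m) = ∑ m ∈ T, c (m - 2) * E m := by
    apply Finset.sum_subset hsub'
    intro m hmT hmS'
    simp only [hS', hT, Finset.mem_filter, Finset.mem_Icc] at hmT hmS'
    obtain ⟨⟨h1, h2⟩, k, hk⟩ := hmT
    have : m - 2 ≤ -n ∨ n ≤ m - 2 := by
      by_contra hcon
      push_neg at hcon
      exact hmS' ⟨⟨by omega, by omega⟩, ⟨k, hk⟩⟩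
    rw [hc0 _ this, zero_mul]
  have hsub : S ⊆ T := by
    intro m hm
    simp only [hS, hT, Finset.mem_filter, Finset.mem_Icc] at hm ⊢
    exact ⟨⟨by omega, by omega⟩, hm.2⟩
  have step4 : (∑ m ∈ S, c m * E m) = ∑ m ∈ T, c m * E m := by
    apply Finset.sum_subset hsub
    intro m hmT hmS
    simp only [hS, hT, Finset.mem_filter, Finset.mem_Icc] at hmT hmS
    obtain ⟨⟨h1, h2⟩, k, hk⟩ := hmT
    have : m ≤ -n ∨ n ≤ m := by
      by_contra hcon
      push_neg at hcon
      exact hmS ⟨⟨by omega, by omega⟩, ⟨k, hk⟩⟩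
    rw [hc0 _ this, zero_mul]
  have combine : omegaPoly ω ℓ ψ * (Complex.exp (Complex.I * 2 * (ψ:ℂ)) - 1)
      = ∑ m ∈ T, (c (m - 2) - c m) * E m := by
    rw [step1, step2, step3, step4, ← Finset.sum_sub_distrib]
    apply Finset.sum_congr rfl
    intro m _
    ring
  rw [combine]
  calc ‖∑ m ∈ T, (c (m - 2) - c m) * E m‖ ≤ ∑ m ∈ T, ‖(c (m - 2) - c m) * E m‖ :=
        norm_sum_le _ _
    _ ≤ ∑ m ∈ T, L * (2 / (ℓ:ℝ)) := by
        apply Finset.sum_le_sum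
        intro m _
        rw [norm_mul]
        have hEone : ‖E m‖ = 1 := by
          have : Complex.I * (m:ℂ) * (ψ:ℂ) = (((m:ℝ) * ψ : ℝ):ℂ) * Complex.I := by
            push_cast; ring
          rw [hE]
          simp only [this]
          rw [Complex.norm_exp_ofReal_mul_I]
        rw [hEone, mul_one]
        have : c (m - 2) - c m = ((ω (((m:ℝ) - 2)/(ℓ:ℝ)) - ω ((m:ℝ)/(ℓ:ℝ)) : ℝ) : ℂ) := by
          simp only [hc]
          push_cast
          ring_nf
        rw [this, Complex.norm_real, Real.norm_eq_abs]
        calc |ω (((m:ℝ) - 2)/(ℓ:ℝ)) - ω ((m:ℝ)/(ℓ:ℝ))|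
            ≤ L * |((m:ℝ) - 2)/(ℓ:ℝ) - (m:ℝ)/(ℓ:ℝ)| := hlip _ _
          _ = L * (2 / (ℓ:ℝ)) := by
              congr 1
              rw [div_sub_div_same, abs_div, abs_of_pos hℓpos]
              norm_num
    _ = (T.card : ℝ) * (L * (2 / (ℓ:ℝ))) := by rw [Finset.sum_const, nsmul_eq_mul]
    _ ≤ (2 * (ℓ:ℝ) + 3) * (L * (2 / (ℓ:ℝ))) := by
        apply mul_le_mul_of_nonneg_right _ (by positivity)
        have h1 : T.card ≤ (Finset.Icc (-n) (n + 2)).card := Finset.card_filter_le _ _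
        have h2 : (Finset.Icc (-n) (n + 2)).card = (2 * n + 3).toNat := by
          rw [Int.card_Icc]; congr 1; ring
        have h3 : (T.card : ℝ) ≤ ((2 * n + 3).toNat : ℝ) := by exact_mod_cast h1.trans h2.le
        calc (T.card : ℝ) ≤ ((2 * n + 3).toNat : ℝ) := h3
          _ = 2 * (ℓ:ℝ) + 3 := by
              have : ((2 * n + 3).toNat : ℤ) = 2 * n + 3 := Int.toNat_of_nonneg (by omega)
              have := congrArg (fun z : ℤ => (z : ℝ)) this
              push_cast [hn] at this ⊢
              linarith
    _ ≤ 7 * L := by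
        rw [mul_comm L, ← mul_assoc]
        apply mul_le_mul_of_nonneg_right _ hL
        have h2ℓ : (2:ℝ) ≤ (ℓ:ℝ) := by exact_mod_cast hℓ
        calc (2*(ℓ:ℝ)+3) * (2/(ℓ:ℝ)) = (4*(ℓ:ℝ)+6)/(ℓ:ℝ) := by ring
          _ ≤ 7 := by rw [div_le_iff₀ hℓpos]; linarith

theorem commutator_hilbert_schmidt_bound
    (σ : ℝ → ℝ) (hσ : ContDiff ℝ 1 σ) (hper : Function.Periodic σ (2*Real.pi))
    (hπper : ∀ φ : ℝ, σ (φ + Real.pi) = σ φ)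
    (ω : ℝ → ℝ) (hω : ContDiff ℝ (⊤ : ℕ∞) ω)
    (hωsupp : HasCompactSupport ω) (hωsub : tsupport ω ⊆ Set.Ioo (-1 : ℝ) 1) :
    ∃ C > 0, ∀ ℓ : ℕ, 2 ≤ ℓ →
      (∫ φ in (-Real.pi)..Real.pi, ∫ φ' in (-Real.pi)..Real.pi,
        (‖omegaPoly ω ℓ (φ - φ')‖)^2 * (σ φ - σ φ')^2) ≤ C := by
  obtain ⟨M, hM, hMb⟩ := sigma_bound σ hσ hπper
  have hdcont : Continuous (deriv ω) := hω.continuous_deriv (by simp)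
  obtain ⟨L0, hL0⟩ := (hωsupp.deriv).exists_bound_of_continuous hdcont
  set L : ℝ := max L0 0 with hL
  have hLnn : 0 ≤ L := le_max_right _ _
  have hLb : ∀ x : ℝ, ‖deriv ω x‖ ≤ L := fun x => (hL0 x).trans (le_max_left _ _)
  have hlip : ∀ x y : ℝ, |ω x - ω y| ≤ L * |x - y| := by
    intro x y
    have := Convex.norm_image_sub_le_of_norm_deriv_le
      (fun z _ => ((hω.differentiable (by simp)).differentiableAt))
      (fun z _ => hLb z) (convex_univ) (Set.mem_univ y) (Set.mem_univ x)
    simpa [Real.norm_eq_abs] using this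
  have hω0 : ∀ x : ℝ, 1 ≤ |x| → ω x = 0 := by
    intro x hx
    by_contra h
    have hmem : x ∈ tsupport ω := subset_tsupport ω (by simpa [Function.mem_support] using h)
    have := hωsub hmem
    rw [Set.mem_Ioo] at this
    rw [le_abs] at hx
    rcases hx with h1 | h1 <;> linarith [this.1, this.2]
  set Kc : ℝ := M * (7 * L) with hKc
  have hKcnn : 0 ≤ Kc := by positivity
  have key : ∀ ℓ : ℕ, 2 ≤ ℓ → ∀ φ φ' : ℝ,
      (‖omegaPoly ω ℓ (φ - φ')‖)^2 * (σ φ - σ φ')^2 ≤ Kc^2 := by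
    intro ℓ hℓ φ φ'
    have h1 : ‖omegaPoly ω ℓ (φ - φ')‖ * |σ φ - σ φ'| ≤ Kc := by
      calc ‖omegaPoly ω ℓ (φ - φ')‖ * |σ φ - σ φ'|
          ≤ ‖omegaPoly ω ℓ (φ - φ')‖ *
            (M * ‖Complex.exp (Complex.I * 2 * ((φ - φ' : ℝ):ℂ)) - 1‖) :=
            mul_le_mul_of_nonneg_left (hMb φ φ') (norm_nonneg _)
        _ = M * ‖omegaPoly ω ℓ (φ - φ') *
            (Complex.exp (Complex.I * 2 * ((φ - φ' : ℝ):ℂ)) - 1)‖ := by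
            rw [norm_mul]; ring
        _ ≤ M * (7 * L) :=
            mul_le_mul_of_nonneg_left
              (omegaPoly_mul_bound ω L hLnn hlip hω0 ℓ hℓ (φ - φ')) hM.le
    have h2 : (‖omegaPoly ω ℓ (φ - φ')‖)^2 * (σ φ - σ φ')^2
        = (‖omegaPoly ω ℓ (φ - φ')‖ * |σ φ - σ φ'|)^2 := by
      rw [mul_pow, sq_abs]
    rw [h2]
    exact pow_le_pow_left₀ (by positivity) h1 2
  refine ⟨Kc^2 * (2*Real.pi) * (2*Real.pi) + 1, by positivity, ?_⟩
  intro ℓ hℓ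
  have habs : |Real.pi - (-Real.pi)| = 2 * Real.pi := by
    rw [sub_neg_eq_add, abs_of_pos (by positivity)]
    ring
  have hinner : ∀ φ : ℝ, ‖∫ φ' in (-Real.pi)..Real.pi,
      (‖omegaPoly ω ℓ (φ - φ')‖)^2 * (σ φ - σ φ')^2‖ ≤ Kc^2 * (2*Real.pi) := by
    intro φ
    have := intervalIntegral.norm_integral_le_of_norm_le_const
      (C := Kc^2) (a := -Real.pi) (b := Real.pi)
      (f := fun φ' => (‖omegaPoly ω ℓ (φ - φ')‖)^2 * (σ φ - σ φ')^2)
      (fun x _ => by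
        rw [Real.norm_eq_abs, abs_of_nonneg (mul_nonneg (sq_nonneg _) (sq_nonneg _))]
        exact key ℓ hℓ φ x)
    rwa [habs] at this
  have houter := intervalIntegral.norm_integral_le_of_norm_le_const
    (C := Kc^2 * (2*Real.pi)) (a := -Real.pi) (b := Real.pi)
    (f := fun φ => ∫ φ' in (-Real.pi)..Real.pi,
      (‖omegaPoly ω ℓ (φ - φ')‖)^2 * (σ φ - σ φ')^2)
    (fun x _ => hinner x)
  rw [habs] at houter
  calc (∫ φ in (-Real.pi)..Real.pi, ∫ φ' in (-Real.pi)..Real.pi,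
        (‖omegaPoly ω ℓ (φ - φ')‖)^2 * (σ φ - σ φ')^2)
      ≤ ‖∫ φ in (-Real.pi)..Real.pi, ∫ φ' in (-Real.pi)..Real.pi,
        (‖omegaPoly ω ℓ (φ - φ')‖)^2 * (σ φ - σ φ')^2‖ := le_abs_self _
    _ ≤ Kc^2 * (2*Real.pi) * (2*Real.pi) := houter
    _ ≤ Kc^2 * (2*Real.pi) * (2*Real.pi) + 1 := by linarith
end

section
/- There exist constants C > 0 and ℓ₀ ≥ 2 such that for every integer ℓ ≥ ℓ₀ and every real λ ∈ [ℓ², (ℓ+1)²], the series Σ_{k≥1, k≠ℓ} √k / |k(k+1) − λ| (over positive integers k ≠ ℓ) converges and its sum is at most C·ℓ^{−1/2}·log ℓ. -/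
open Real Filter

lemma tele_aux (x : ℝ) (hx : 1 ≤ x) :
    1 / ((x+1) * Real.sqrt (x+1)) ≤ 2 * ((Real.sqrt x)⁻¹ - (Real.sqrt (x+1))⁻¹) := by
  have hx0 : (0:ℝ) < x := by linarith
  have ha : 0 < Real.sqrt x := Real.sqrt_pos.2 hx0
  have hb : 0 < Real.sqrt (x+1) := Real.sqrt_pos.2 (by linarith)
  have hab : Real.sqrt x ≤ Real.sqrt (x+1) := Real.sqrt_le_sqrt (by linarith)
  have ha2 : Real.sqrt x * Real.sqrt x = x := Real.mul_self_sqrt hx0.le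
  have hb2 : Real.sqrt (x+1) * Real.sqrt (x+1) = x + 1 := Real.mul_self_sqrt (by linarith)
  rw [div_le_iff₀ (by positivity)]
  have key : 2 * ((Real.sqrt x)⁻¹ - (Real.sqrt (x+1))⁻¹)
      = 2 * (Real.sqrt (x+1) - Real.sqrt x) / (Real.sqrt x * Real.sqrt (x+1)) := by
    field_simp
  rw [key, div_mul_eq_mul_div, le_div_iff₀ (by positivity)]
  nlinarith [mul_pos ha hb, sq_nonneg (Real.sqrt (x+1) - Real.sqrt x)]

lemma harm_aux (n : ℕ) : ∑ i ∈ Finset.range n, 1 / ((i:ℝ)+1) ≤ 1 + Real.log n := by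
  have : ∑ i ∈ Finset.range n, 1 / ((i:ℝ)+1) = ((harmonic n : ℚ) : ℝ) := by
    unfold harmonic; push_cast; simp [one_div]
  rw [this]; exact harmonic_le_one_add_log n

lemma sqrt_div_aux (a c : ℝ) (ha : 0 < a) (hc : 0 < c) :
    Real.sqrt a / (c * a) = 1 / (c * Real.sqrt a) := by
  have h := Real.sq_sqrt ha.le
  have hs := Real.sqrt_pos.2 ha
  field_simp
  nlinarith [h]

theorem reduced_resolvent_sum_bound :
    ∃ C > 0, ∃ ℓ₀ : ℕ, 2 ≤ ℓ₀ ∧ ∀ ℓ : ℕ, ℓ₀ ≤ ℓ → ∀ lam : ℝ,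
      (ℓ:ℝ)^2 ≤ lam → lam ≤ ((ℓ:ℝ)+1)^2 →
      Summable (fun k : ℕ =>
        if k = ℓ then 0 else Real.sqrt k / |(k:ℝ)*((k:ℝ)+1) - lam|) ∧
      (∑' k : ℕ, if k = ℓ then 0 else Real.sqrt k / |(k:ℝ)*((k:ℝ)+1) - lam|)
        ≤ C * (ℓ:ℝ) ^ (-(1/2) : ℝ) * Real.log ℓ := by
  refine ⟨6, by norm_num, 8, by norm_num, ?_⟩
  intro ℓ hℓ lam h1 h2
  set f : ℕ → ℝ := fun k =>
    if k = ℓ then 0 else Real.sqrt k / |(k:ℝ)*((k:ℝ)+1) - lam| with hfdef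
  have hL : (8:ℝ) ≤ (ℓ:ℝ) := by exact_mod_cast hℓ
  have hL0 : (0:ℝ) < ℓ := by linarith
  have hs : (0:ℝ) < Real.sqrt ℓ := Real.sqrt_pos.2 hL0
  have hnonneg : ∀ k, 0 ≤ f k := by
    intro k
    simp only [hfdef]
    split
    · exact le_rfl
    · positivity
  -- harmonic-type bound
  have Hharm : ∑ i ∈ Finset.range ℓ, 1/(((i:ℝ)+1) * Real.sqrt ℓ)
      ≤ (1 + Real.log ℓ) / Real.sqrt ℓ := by
    have e : ∀ i ∈ Finset.range ℓ,
        1/(((i:ℝ)+1) * Real.sqrt ℓ) = (1/((i:ℝ)+1)) * (Real.sqrt ℓ)⁻¹ := by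
      intro i _
      rw [one_div, mul_inv, one_div]
    rw [Finset.sum_congr rfl e, ← Finset.sum_mul, div_eq_mul_inv]
    exact mul_le_mul_of_nonneg_right (harm_aux ℓ) (by positivity)
  -- Part 1 : the sum over k ≤ ℓ
  have part1 : ∑ k ∈ Finset.range (ℓ+1), f k ≤ (1 + Real.log ℓ)/Real.sqrt ℓ := by
    rw [← Finset.sum_range_reflect]
    have hb : ∀ j ∈ Finset.range (ℓ+1),
        f (ℓ + 1 - 1 - j) ≤ (if j = 0 then 0 else 1/((j:ℝ) * Real.sqrt ℓ)) := by
      intro j hj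
      have hjl : j ≤ ℓ := by simpa using Nat.lt_succ_iff.1 (Finset.mem_range.1 hj)
      rcases eq_or_ne j 0 with rfl | hj0
      · simp [hfdef]
      · rw [if_neg hj0]
        have hj1 : 1 ≤ j := Nat.one_le_iff_ne_zero.2 hj0
        have hne : ℓ + 1 - 1 - j ≠ ℓ := by omega
        simp only [hfdef, if_neg hne]
        have hc : ((ℓ + 1 - 1 - j : ℕ) : ℝ) = (ℓ:ℝ) - j := by
          push_cast [Nat.add_sub_cancel, Nat.cast_sub hjl]; ring
        rw [hc]
        have hj1' : (1:ℝ) ≤ (j:ℝ) := by exact_mod_cast hj1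
        have hjl' : (j:ℝ) ≤ (ℓ:ℝ) := by exact_mod_cast hjl
        set x : ℝ := (ℓ:ℝ) - (j:ℝ) with hxdef
        have hden : (j:ℝ)*(ℓ:ℝ) ≤ lam - x*(x+1) := by nlinarith
        have hpos : (0:ℝ) < (j:ℝ)*(ℓ:ℝ) := by positivity
        have habs : |x*(x+1) - lam| = lam - x*(x+1) := by
          rw [abs_of_nonpos (by nlinarith)]; ring
        rw [habs]
        have hst : Real.sqrt x ≤ Real.sqrt ℓ := Real.sqrt_le_sqrt (by linarith)
        calc Real.sqrt x / (lam - x*(x+1))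
            ≤ Real.sqrt ℓ / ((j:ℝ)*(ℓ:ℝ)) :=
              div_le_div₀ (Real.sqrt_nonneg _) hst hpos hden
          _ = 1/((j:ℝ) * Real.sqrt ℓ) := sqrt_div_aux _ _ hL0 (by positivity)
    calc ∑ j ∈ Finset.range (ℓ+1), f (ℓ + 1 - 1 - j)
        ≤ ∑ j ∈ Finset.range (ℓ+1), (if j = 0 then 0 else 1/((j:ℝ) * Real.sqrt ℓ)) :=
          Finset.sum_le_sum hb
      _ = ∑ j ∈ Finset.range ℓ, 1/(((j:ℝ)+1) * Real.sqrt ℓ) := by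
          rw [Finset.sum_range_succ' (fun j => if j = 0 then 0 else 1/((j:ℝ) * Real.sqrt ℓ)) ℓ]
          norm_num
      _ ≤ (1 + Real.log ℓ)/Real.sqrt ℓ := Hharm
  -- Part 2 : the tail terms
  have part2term : ∀ i : ℕ, f (ℓ+1+i) ≤ 1/(((i:ℝ)+1) * Real.sqrt ((ℓ:ℝ)+1+i)) := by
    intro i
    have hne : ℓ+1+i ≠ ℓ := by omega
    simp only [hfdef, if_neg hne]
    push_cast
    set x : ℝ := (ℓ:ℝ)+1+(i:ℝ) with hxdef
    have hi0 : (0:ℝ) ≤ (i:ℝ) := Nat.cast_nonneg i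
    have hxpos : (0:ℝ) < x := by positivity
    have hden : ((i:ℝ)+1)*x ≤ x*(x+1) - lam := by nlinarith
    have habs : |x*(x+1) - lam| = x*(x+1) - lam := by
      rw [abs_of_nonneg]; nlinarith
    rw [habs]
    calc Real.sqrt x / (x*(x+1) - lam)
        ≤ Real.sqrt x / (((i:ℝ)+1)*x) :=
          div_le_div₀ (Real.sqrt_nonneg _) le_rfl (by positivity) hden
      _ = 1/(((i:ℝ)+1) * Real.sqrt x) := sqrt_div_aux _ _ hxpos (by positivity)
  have part2 : ∀ n, ∑ i ∈ Finset.range n, f (ℓ+1+i)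
      ≤ (1 + Real.log ℓ)/Real.sqrt ℓ + 2/Real.sqrt ℓ := by
    intro n
    have step1 : ∑ i ∈ Finset.range n, f (ℓ+1+i)
        ≤ ∑ i ∈ Finset.range n, 1/(((i:ℝ)+1) * Real.sqrt ((ℓ:ℝ)+1+i)) :=
      Finset.sum_le_sum (fun i _ => part2term i)
    refine step1.trans ?_
    have hvle : ∀ i : ℕ, 1/(((i:ℝ)+1) * Real.sqrt ((ℓ:ℝ)+1+i))
        ≤ 1/(((i:ℝ)+1) * Real.sqrt ℓ) := by
      intro i
      have hi0 : (0:ℝ) ≤ (i:ℝ) := Nat.cast_nonneg i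
      apply one_div_le_one_div_of_le (by positivity)
      exact mul_le_mul_of_nonneg_left (Real.sqrt_le_sqrt (by linarith)) (by positivity)
    have hvnonneg : ∀ i : ℕ, (0:ℝ) ≤ 1/(((i:ℝ)+1) * Real.sqrt ((ℓ:ℝ)+1+i)) := by
      intro i
      have hi0 : (0:ℝ) ≤ (i:ℝ) := Nat.cast_nonneg i
      positivity
    have hfirst : ∀ m : ℕ, m ≤ ℓ → ∑ i ∈ Finset.range m, 1/(((i:ℝ)+1) * Real.sqrt ((ℓ:ℝ)+1+i))
        ≤ (1 + Real.log ℓ)/Real.sqrt ℓ := by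
      intro m hm
      calc ∑ i ∈ Finset.range m, 1/(((i:ℝ)+1) * Real.sqrt ((ℓ:ℝ)+1+i))
          ≤ ∑ i ∈ Finset.range m, 1/(((i:ℝ)+1) * Real.sqrt ℓ) :=
            Finset.sum_le_sum (fun i _ => hvle i)
        _ ≤ ∑ i ∈ Finset.range ℓ, 1/(((i:ℝ)+1) * Real.sqrt ℓ) := by
            apply Finset.sum_le_sum_of_subset_of_nonneg
              (Finset.range_subset_range.2 hm)
            intro i _ _
            have hi0 : (0:ℝ) ≤ (i:ℝ) := Nat.cast_nonneg i
            positivity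
        _ ≤ (1 + Real.log ℓ)/Real.sqrt ℓ := Hharm
    rcases le_or_gt n ℓ with hn | hn
    · have h2s : (0:ℝ) ≤ 2/Real.sqrt ℓ := by positivity
      linarith [hfirst n hn]
    · obtain ⟨m, rfl⟩ : ∃ m, n = ℓ + m := ⟨n - ℓ, by omega⟩
      rw [Finset.sum_range_add]
      refine add_le_add (hfirst ℓ le_rfl) ?_
      set g : ℕ → ℝ := fun i => (Real.sqrt ((ℓ:ℝ)+(i:ℝ)))⁻¹ with hgdef
      have hterm : ∀ i ∈ Finset.range m,
          1/((((ℓ+i:ℕ):ℝ)+1) * Real.sqrt ((ℓ:ℝ)+1+((ℓ+i:ℕ):ℝ))) ≤ 2*(g i - g (i+1)) := by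
        intro i _
        have hi0 : (0:ℝ) ≤ (i:ℝ) := Nat.cast_nonneg i
        have hy1 : (1:ℝ) ≤ (ℓ:ℝ)+(i:ℝ) := by linarith
        have hstep : 1/((((ℓ+i:ℕ):ℝ)+1) * Real.sqrt ((ℓ:ℝ)+1+((ℓ+i:ℕ):ℝ)))
            ≤ 1/(((ℓ:ℝ)+(i:ℝ)+1) * Real.sqrt ((ℓ:ℝ)+(i:ℝ)+1)) := by
          push_cast
          apply one_div_le_one_div_of_le (by positivity)
          apply mul_le_mul_of_nonneg_left (Real.sqrt_le_sqrt (by linarith)) (by linarith)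
        refine hstep.trans ?_
        have h2 := tele_aux ((ℓ:ℝ)+(i:ℝ)) hy1
        have e1 : ((ℓ:ℝ)+((i+1:ℕ):ℝ)) = (ℓ:ℝ)+(i:ℝ)+1 := by push_cast; ring
        simp only [hgdef, e1]
        exact h2
      calc ∑ i ∈ Finset.range m, 1/((((ℓ+i:ℕ):ℝ)+1) * Real.sqrt ((ℓ:ℝ)+1+((ℓ+i:ℕ):ℝ)))
          ≤ ∑ i ∈ Finset.range m, 2*(g i - g (i+1)) := Finset.sum_le_sum hterm
        _ = 2*(g 0 - g m) := by rw [← Finset.mul_sum, Finset.sum_range_sub' g m]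
        _ ≤ 2*(g 0) := by
            have hgm : (0:ℝ) ≤ g m := by simp only [hgdef]; positivity
            linarith
        _ = 2/Real.sqrt ℓ := by
            simp only [hgdef, Nat.cast_zero, add_zero, div_eq_mul_inv]
  -- combine
  have key : ∀ n, ∑ k ∈ Finset.range n, f k ≤ (4 + 2*Real.log ℓ)/Real.sqrt ℓ := by
    intro n
    have hsub : ∑ k ∈ Finset.range n, f k ≤ ∑ k ∈ Finset.range (ℓ+1+n), f k :=
      Finset.sum_le_sum_of_subset_of_nonneg (Finset.range_subset_range.2 (by omega))
        (fun k _ _ => hnonneg k)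
    refine hsub.trans ?_
    rw [Finset.sum_range_add]
    have := add_le_add part1 (part2 n)
    refine this.trans (le_of_eq ?_)
    rw [← add_div, ← add_div]
    ring_nf
  have hsummable : Summable f := summable_of_sum_range_le hnonneg key
  refine ⟨hsummable, ?_⟩
  have ht := Real.tsum_le_of_sum_range_le hnonneg key
  refine ht.trans ?_
  have hlog : 1 ≤ Real.log ℓ := by
    rw [Real.le_log_iff_exp_le hL0]
    calc Real.exp 1 ≤ 2.7182818286 := Real.exp_one_lt_d9.le
      _ ≤ 8 := by norm_num
      _ ≤ (ℓ:ℝ) := hL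
  have hrpow : (ℓ:ℝ) ^ (-(1/2) : ℝ) = (Real.sqrt ℓ)⁻¹ := by
    rw [Real.rpow_neg hL0.le, ← Real.sqrt_eq_rpow]
  rw [hrpow, div_le_iff₀ hs]
  have e2 : 6 * (Real.sqrt ℓ)⁻¹ * Real.log ℓ * Real.sqrt ℓ = 6 * Real.log ℓ := by
    field_simp
  rw [e2]
  linarith
end
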